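/- arXiv:2403.13735 — 10 statements merged into one kernel-verified Lean document; each statement's English description precedes it below -/
import Mathlib

section
/- Let A be a unital ring and S ⊆ A a unital subring that is spectrally invariant in A, i.e. whenever x ∈ S is invertible in A, its inverse lies in S. Let p ∈ S be an idempotent (p·p = p). Then the corner pSp is spectrally invariant in the corner ring pAp: if x ∈ pSp and y ∈ pAp satisfy x·y = y·x = p, then y ∈ pSp. -/
/-!
Extend an element `x` of the corner `pAp` by the complementary idempotent: `x + (1 - p)`.
Since `x (1 - p) = (1 - p) x = 0`, corner inverses `x, y` (with `x y = y x = p`) extend to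
honest inverses `x + (1 - p)` and `y + (1 - p)` in `A`. If `x ∈ S`, spectral invariance of `S`
puts `y + (1 - p)` in `S`, hence `y ∈ S`, and `y = p y p` lies in `pSp`.
-/

namespace IsIdempotentElem

variable {R : Type*} [Ring R] {p : R}

lemma mul_corner (hp : IsIdempotentElem p) (a : R) : p * (p * a * p) = p * a * p := by
  rw [← mul_assoc, ← mul_assoc, hp.eq]

lemma corner_mul (hp : IsIdempotentElem p) (a : R) : p * a * p * p = p * a * p := by
  rw [mul_assoc, hp.eq]

lemma add_one_sub_mul_add_one_sub_eq_one (hp : IsIdempotentElem p) {x y : R}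
    (hx : x * p = x) (hy : p * y = y) (hxy : x * y = p) :
    (x + (1 - p)) * (y + (1 - p)) = 1 := by
  have hx' : x * (1 - p) = 0 := by rw [mul_sub, mul_one, hx, sub_self]
  have hy' : (1 - p) * y = 0 := by rw [sub_mul, one_mul, hy, sub_self]
  calc (x + (1 - p)) * (y + (1 - p))
      = x * y + x * (1 - p) + (1 - p) * y + (1 - p) * (1 - p) := by noncomm_ring
    _ = 1 := by rw [hxy, hx', hy', hp.one_sub.eq]; abel

end IsIdempotentElem

/-- If `S` is a spectrally invariant unital subring of a unital ring `A` and `p ∈ S` is an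
idempotent, then the corner `pSp` is spectrally invariant in the corner ring `pAp`. -/
theorem stmt_0 (A : Type*) [Ring A] (S : Subring A)
    (hspec : ∀ x : A, x ∈ S → ∀ y : A, x * y = 1 → y * x = 1 → y ∈ S)
    (p : A) (hpS : p ∈ S) (hp : p * p = p)
    (x y : A)
    (hx : ∃ s ∈ S, x = p * s * p)
    (hy : ∃ a : A, y = p * a * p)
    (hxy : x * y = p) (hyx : y * x = p) :
    ∃ s ∈ S, y = p * s * p := by
  have hp : IsIdempotentElem p := hp
  obtain ⟨s, hs, rfl⟩ := hx
  obtain ⟨a, rfl⟩ := hy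
  have hxS : p * s * p ∈ S := S.mul_mem (S.mul_mem hpS hs) hpS
  have hqS : 1 - p ∈ S := S.sub_mem S.one_mem hpS
  have hyqS : p * a * p + (1 - p) ∈ S :=
    hspec _ (S.add_mem hxS hqS) _
      (hp.add_one_sub_mul_add_one_sub_eq_one (hp.corner_mul s) (hp.mul_corner a) hxy)
      (hp.add_one_sub_mul_add_one_sub_eq_one (hp.corner_mul a) (hp.mul_corner s) hyx)
  refine ⟨p * a * p, (S.add_mem_cancel_right hqS).1 hyqS, ?_⟩
  rw [hp.mul_corner, hp.corner_mul]
end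

section
/- Let V be a complex vector space, let P, Q : V → V be linear idempotents, and let W ∈ V satisfy P(W) = 0. Set W′ := (2P−1)(2Q−1)W and assume Q(W′) = 0. Then P(W′) = 2·PQ(W), Q(W) = 2·QP(W′), and for every n ≥ 1 one has (PQ)ⁿ(W) = 4^{1−n}·PQ(W) and (QP)ⁿ(W′) = 4^{1−n}·QP(W′). -/
/-!
Since `P` is idempotent, `P (2P - 1) = P`, so `P W' = P (2Q - 1) W = 2 PQ W`. Expanding
`Q W' = 0` gives `Q W = 4 QPQ W`; applying `P` shows that `PQ W` is an eigenvector of `PQ` with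
eigenvalue `1/4`, and `QP W' = 2 QPQ W` is then an eigenvector of `QP` with the same eigenvalue.
All four identities follow.
-/

open Module

section Reflection

variable {R M : Type*} [CommRing R] [AddCommGroup M] [Module R M] {P Q : End R M}

theorem IsIdempotentElem.apply_two_nsmul_sub_one_apply (hP : IsIdempotentElem P) (v : M) :
    P ((2 • P - 1 : End R M) v) = P v := by
  have hPP : P (P v) = P v := LinearMap.congr_fun hP v
  simp only [LinearMap.sub_apply, LinearMap.smul_apply, End.one_apply, map_sub, map_nsmul, hPP]
  module

theorem IsIdempotentElem.apply_reflections_of_apply_eq_zero (hP : IsIdempotentElem P) {W : M}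
    (hPW : P W = 0) :
    P ((2 • P - 1 : End R M) ((2 • Q - 1 : End R M) W)) = (2 : R) • P (Q W) := by
  rw [hP.apply_two_nsmul_sub_one_apply]
  simp only [LinearMap.sub_apply, LinearMap.smul_apply, End.one_apply, map_sub, map_nsmul, hPW]
  module

theorem IsIdempotentElem.apply_reflections_of_other_apply_eq_zero (hQ : IsIdempotentElem Q)
    {W : M} (hPW : P W = 0) :
    Q ((2 • P - 1 : End R M) ((2 • Q - 1 : End R M) W)) = (4 : R) • Q (P (Q W)) - Q W := by
  have hQQ : Q (Q W) = Q W := LinearMap.congr_fun hQ W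
  simp only [LinearMap.sub_apply, LinearMap.smul_apply, End.one_apply, map_sub, map_nsmul, hPW,
    hQQ, map_zero]
  module

end Reflection

theorem Module.End.pow_succ_apply_of_apply_apply_eq_smul {R M : Type*} [Semiring R]
    [AddCommMonoid M] [Module R M] {T : End R M} {c : R} {v : M} (h : T (T v) = c • T v)
    (n : ℕ) : (T ^ (n + 1)) v = c ^ n • T v := by
  induction n with
  | zero => simp
  | succ n ih => rw [pow_succ', End.mul_apply, ih, map_smul, h, smul_smul, pow_succ]

/-- If `P W = 0`, `W' = (2P-1)(2Q-1)W` and `Q W' = 0` for linear idempotents `P, Q` on a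
complex vector space, then `P W' = 2 PQ W`, `Q W = 2 QP W'`, and for `n ≥ 1`,
`(PQ)ⁿ W = 4^{1-n} PQ W` and `(QP)ⁿ W' = 4^{1-n} QP W'`. -/
theorem stmt_4 {V : Type*} [AddCommGroup V] [Module ℂ V]
    (P Q : Module.End ℂ V) (hP : P * P = P) (hQ : Q * Q = Q)
    (W W' : V) (hPW : P W = 0)
    (hW' : W' = ((2 • P - 1 : Module.End ℂ V)) (((2 • Q - 1 : Module.End ℂ V)) W))
    (hQW' : Q W' = 0) :
    P W' = (2 : ℂ) • P (Q W) ∧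
    Q W = (2 : ℂ) • Q (P W') ∧
    ∀ n : ℕ, 1 ≤ n →
      ((P * Q) ^ n) W = ((4 : ℂ) ^ (1 - (n : ℤ))) • P (Q W) ∧
      ((Q * P) ^ n) W' = ((4 : ℂ) ^ (1 - (n : ℤ))) • Q (P W') := by
  have hPW' : P W' = (2 : ℂ) • P (Q W) :=
    hW' ▸ IsIdempotentElem.apply_reflections_of_apply_eq_zero hP hPW
  have hQW_four : Q W = (4 : ℂ) • Q (P (Q W)) := by
    rw [hW', IsIdempotentElem.apply_reflections_of_other_apply_eq_zero hQ hPW,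
      sub_eq_zero] at hQW'
    exact hQW'.symm
  have hQPW' : Q (P W') = (2 : ℂ) • Q (P (Q W)) := by rw [hPW', map_smul]
  have hPQ : (P * Q) ((P * Q) W) = (4 : ℂ)⁻¹ • (P * Q) W := by
    rw [eq_inv_smul_iff₀ (by norm_num : (4 : ℂ) ≠ 0)]
    simpa only [End.mul_apply, map_smul] using (congrArg P hQW_four).symm
  have hQP : (Q * P) ((Q * P) W') = (4 : ℂ)⁻¹ • (Q * P) W' := by
    simp only [End.mul_apply] at hPQ ⊢
    rw [hQPW', map_smul, map_smul, hPQ, map_smul, smul_comm]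
  have hQW_two : Q W = (2 : ℂ) • Q (P W') := by
    rw [hQPW', smul_smul]
    norm_num
    exact hQW_four
  refine ⟨hPW', hQW_two, fun n hn => ?_⟩
  obtain ⟨m, rfl⟩ := Nat.exists_eq_add_of_le' hn
  have h4 : (4 : ℂ) ^ (1 - ((m + 1 : ℕ) : ℤ)) = (4 : ℂ)⁻¹ ^ m := by
    rw [Nat.cast_succ, sub_add_cancel_right, zpow_neg, zpow_natCast, inv_pow]
  rw [h4]
  exact ⟨End.pow_succ_apply_of_apply_apply_eq_smul hPQ m,
    End.pow_succ_apply_of_apply_apply_eq_smul hQP m⟩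
end

section
/- Let V be a complex normed vector space, let P, Q : V → V be linear idempotents, and let W ∈ V satisfy P(W) = 0. Set W′ := (2P−1)(2Q−1)W and assume Q(W′) = 0. Then the series ∑_{n=0}^∞ (PQ)ⁿ(W + P(W′)) converges in V to W + 4·PQ(W), the series ∑_{n=0}^∞ (QP)ⁿ(W′ + Q(W)) converges in V to W′ + 4·QP(W′), and the two sums are equal. -/
open Filter Topology

/-- In a complex normed space, with linear idempotents `P, Q`, `P W = 0`,
`W' = (2P-1)(2Q-1)W` and `Q W' = 0`, the series `∑ (PQ)ⁿ(W + P W')` converges to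
`W + 4 PQ W`, the series `∑ (QP)ⁿ(W' + Q W)` converges to `W' + 4 QP W'`, and the two
sums are equal. -/
theorem stmt_6 {V : Type*} [NormedAddCommGroup V] [NormedSpace ℂ V]
    (P Q : Module.End ℂ V) (hP : P * P = P) (hQ : Q * Q = Q)
    (W W' : V) (hPW : P W = 0)
    (hW' : W' = ((2 • P - 1 : Module.End ℂ V)) (((2 • Q - 1 : Module.End ℂ V)) W))
    (hQW' : Q W' = 0) :
    Tendsto (fun N : ℕ => ∑ n ∈ Finset.range N, ((P * Q) ^ n) (W + P W'))
      atTop (𝓝 (W + (4 : ℂ) • P (Q W))) ∧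
    Tendsto (fun N : ℕ => ∑ n ∈ Finset.range N, ((Q * P) ^ n) (W' + Q W))
      atTop (𝓝 (W' + (4 : ℂ) • Q (P W'))) ∧
    W + (4 : ℂ) • P (Q W) = W' + (4 : ℂ) • Q (P W') := by
  have hPP : ∀ x, P (P x) = P x := fun x => DFunLike.congr_fun hP x
  have hQQ : ∀ x, Q (Q x) = Q x := fun x => DFunLike.congr_fun hQ x
  have hW2 : W' = (4:ℂ) • P (Q W) - (2:ℂ) • Q W + W := by
    rw [hW']
    simp only [LinearMap.sub_apply, LinearMap.smul_apply, Module.End.one_apply,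
      map_sub, map_smul, hPW, map_nsmul, smul_zero]
    module
  -- P W' = 2 P(QW)
  have hPW' : P W' = (2:ℂ) • P (Q W) := by
    rw [hW2]
    simp only [map_add, map_sub, map_smul, hPW, hPP]
    module
  -- Q P (Q W) = (1/4) Q W
  have hQu : Q (P (Q W)) = (4:ℂ)⁻¹ • Q W := by
    have h0 : (4:ℂ) • Q (P (Q W)) - Q W = 0 := by
      have h := hQW'
      rw [hW2] at h
      simp only [map_add, map_sub, map_smul, hQQ] at h
      rw [← h]; module
    have h1 : (4:ℂ) • Q (P (Q W)) = Q W := by linear_combination (norm := module) h0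
    calc Q (P (Q W)) = (4:ℂ)⁻¹ • ((4:ℂ) • Q (P (Q W))) := by
            rw [smul_smul]; norm_num
      _ = (4:ℂ)⁻¹ • Q W := by rw [h1]
  -- P Q P (Q W) = (1/4) P (Q W)
  have hPQu : P (Q (P (Q W))) = (4:ℂ)⁻¹ • P (Q W) := by
    rw [hQu, map_smul]
  -- common value equality
  have hEq : W + (4:ℂ) • P (Q W) = W' + (4:ℂ) • Q (P W') := by
    rw [hPW', map_smul, hQu, hW2]
    module
  -- first series terms
  have ha : ∀ n : ℕ, ((P * Q) ^ (n+1)) (W + P W')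
      = (((3:ℂ)/2) * ((4:ℂ)⁻¹) ^ n) • P (Q W) := by
    intro n
    induction n with
    | zero =>
      rw [pow_one, Module.End.mul_apply, hPW', map_add, map_smul, map_add, map_smul, hPQu]
      module
    | succ k ih =>
      rw [pow_succ', Module.End.mul_apply, Module.End.mul_apply, ih,
        map_smul, map_smul, hPQu, smul_smul]
      congr 1; ring
  -- second series terms
  have hb : ∀ n : ℕ, ((Q * P) ^ (n+1)) (W' + Q W)
      = (((3:ℂ)/4) * ((4:ℂ)⁻¹) ^ n) • Q W := by
    intro n
    induction n with
    | zero =>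
      rw [pow_one, Module.End.mul_apply, map_add, hPW', map_add, map_smul, hQu]
      module
    | succ k ih =>
      rw [pow_succ', Module.End.mul_apply, Module.End.mul_apply, ih,
        map_smul, map_smul, hQu, smul_smul]
      congr 1; ring
  have hgeo : Tendsto (fun N : ℕ => ∑ k ∈ Finset.range N, ((4:ℂ)⁻¹) ^ k)
      atTop (𝓝 ((1 - (4:ℂ)⁻¹)⁻¹)) :=
    (hasSum_geometric_of_norm_lt_one (by norm_num : ‖(4:ℂ)⁻¹‖ < 1)).tendsto_sum_nat
  refine ⟨?_, ?_, hEq⟩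
  · rw [← tendsto_add_atTop_iff_nat 1]
    have heq : ∀ N : ℕ, (∑ n ∈ Finset.range (N+1), ((P * Q) ^ n) (W + P W'))
        = (((3:ℂ)/2) * ∑ k ∈ Finset.range N, ((4:ℂ)⁻¹) ^ k) • P (Q W)
          + (W + (2:ℂ) • P (Q W)) := by
      intro N
      rw [Finset.sum_range_succ']
      simp only [ha]
      simp only [pow_zero, Module.End.one_apply, hPW', Finset.mul_sum]
      rw [Finset.sum_smul]
    have hlim : Tendsto
        (fun N : ℕ => (((3:ℂ)/2) * ∑ k ∈ Finset.range N, ((4:ℂ)⁻¹) ^ k) • P (Q W)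
          + (W + (2:ℂ) • P (Q W))) atTop
        (𝓝 ((((3:ℂ)/2) * (1 - (4:ℂ)⁻¹)⁻¹) • P (Q W) + (W + (2:ℂ) • P (Q W)))) :=
      (((hgeo.const_mul ((3:ℂ)/2)).smul_const (P (Q W))).add tendsto_const_nhds)
    have : (((3:ℂ)/2) * (1 - (4:ℂ)⁻¹)⁻¹) • P (Q W) + (W + (2:ℂ) • P (Q W))
        = W + (4:ℂ) • P (Q W) := by
      rw [show ((3:ℂ)/2) * (1 - (4:ℂ)⁻¹)⁻¹ = 2 by norm_num]
      module
    rw [this] at hlim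
    exact hlim.congr fun N => (heq N).symm
  · rw [← tendsto_add_atTop_iff_nat 1]
    have heq : ∀ N : ℕ, (∑ n ∈ Finset.range (N+1), ((Q * P) ^ n) (W' + Q W))
        = (((3:ℂ)/4) * ∑ k ∈ Finset.range N, ((4:ℂ)⁻¹) ^ k) • Q W
          + (W' + Q W) := by
      intro N
      rw [Finset.sum_range_succ']
      simp only [hb]
      simp only [pow_zero, Module.End.one_apply, Finset.mul_sum]
      rw [Finset.sum_smul]
    have hlim : Tendsto
        (fun N : ℕ => (((3:ℂ)/4) * ∑ k ∈ Finset.range N, ((4:ℂ)⁻¹) ^ k) • Q W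
          + (W' + Q W)) atTop
        (𝓝 ((((3:ℂ)/4) * (1 - (4:ℂ)⁻¹)⁻¹) • Q W + (W' + Q W))) :=
      (((hgeo.const_mul ((3:ℂ)/4)).smul_const (Q W)).add tendsto_const_nhds)
    have : (((3:ℂ)/4) * (1 - (4:ℂ)⁻¹)⁻¹) • Q W + (W' + Q W)
        = W' + (4:ℂ) • Q (P W') := by
      rw [show ((3:ℂ)/4) * (1 - (4:ℂ)⁻¹)⁻¹ = 1 by norm_num, hPW', map_smul, hQu]
      module
    rw [this] at hlim
    exact hlim.congr fun N => (heq N).symm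
end

section
/- Let H be a complex Hilbert space, M and N closed subspaces of H, and P, Q the orthogonal projections of H onto M and N respectively. Then the sequence ((PQ)ⁿ)_{n≥1} is a Cauchy sequence in the operator norm if and only if M + N is a closed subspace of H; and in that case (PQ)ⁿ converges in operator norm to the orthogonal projection of H onto M ∩ N. -/
/-!
Let `E` be the projection onto `L = M ⊓ N`. Then `P - E` and `Q - E` are the projections onto
`M' = M ⊓ Lᗮ` and `N' = N ⊓ Lᗮ`, which meet only in `0`, and `(PQ)ⁿ⁺¹ - E = ((P - E)(Q - E))ⁿ⁺¹`.
As `M ⊔ N = L ⊕ (M' ⊔ N')`, the sum `M ⊔ N` is closed iff `M' ⊔ N'` is, and for closed subspaces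
meeting only in `0` this happens iff `‖P_{M'} P_{N'}‖ < 1`: one way by the estimate
`(1 - ‖P_{N'} P_{M'}‖) ‖m‖ ≤ ‖m + n‖`, the other by the open mapping theorem for
`M' × N' → M' ⊔ N'`.

So if `M ⊔ N` is closed, `(PQ)ⁿ⁺¹ → E` geometrically. Conversely, if the powers of
`A = (P - E)(Q - E)` converge to `S`, then `AS = S`; a vector fixed by a product of two projections
lies in both ranges, hence in `M' ⊓ N' = 0`, so `S = 0`. Then `‖A ^ 2 ^ k‖ < 1` for some `k`, and
the C⋆-identity `‖A‖² = ‖B‖` for the self-adjoint `B = (P - E)(Q - E)(P - E)`, together with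
`‖B‖ ^ 2 ^ k = ‖B ^ 2 ^ k‖ ≤ ‖A ^ 2 ^ k‖`, gives `‖A‖ < 1`.
-/

open Filter Topology

theorem IsIdempotentElem.sub_pow_succ {R : Type*} [Ring R] {a e : R} (he : IsIdempotentElem e)
    (hae : a * e = e) (hea : e * a = e) (n : ℕ) : (a - e) ^ (n + 1) = a ^ (n + 1) - e := by
  have hpow : ∀ k : ℕ, a ^ k * e = e := fun k ↦ by
    induction k with
    | zero => simp
    | succ k ih => rw [pow_succ', mul_assoc, ih, hae]
  induction n with
  | zero => simp
  | succ n ih =>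
    rw [pow_succ, ih, sub_mul, mul_sub, mul_sub, ← pow_succ, hpow, hea, he.eq, sub_self, sub_zero]

theorem IsIdempotentElem.mul_mul_self_pow_succ {M : Type*} [Monoid M] {p : M}
    (hp : IsIdempotentElem p) (q : M) (n : ℕ) :
    (p * q * p) ^ (n + 1) = (p * q) ^ (n + 1) * p := by
  induction n with
  | zero => simp
  | succ n ih =>
    rw [pow_succ, ih, pow_succ (p * q) (n + 1)]
    simp only [mul_assoc]
    rw [← mul_assoc p p, hp.eq]

theorem IsStarProjection.norm_mul_lt_one_of_tendsto_pow {A : Type*} [NormedRing A] [StarRing A]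
    [CStarRing A] {p q : A} (hp : IsStarProjection p) (hq : IsStarProjection q)
    (h : Tendsto (fun n ↦ (p * q) ^ n) atTop (𝓝 0)) : ‖p * q‖ < 1 := by
  have hsa : IsSelfAdjoint (p * q * p) := by
    simpa [hp.isSelfAdjoint.star_eq] using hq.isSelfAdjoint.conjugate p
  have hsq : ‖p * q‖ ^ 2 = ‖p * q * p‖ := by
    have : star (q * p) * (q * p) = p * q * p := by
      rw [star_mul, hp.isSelfAdjoint.star_eq, hq.isSelfAdjoint.star_eq, mul_assoc p q,
        ← mul_assoc q q, hq.isIdempotentElem.eq, mul_assoc]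
    rw [← this, CStarRing.norm_star_mul_self, ← norm_star (p * q), star_mul,
      hp.isSelfAdjoint.star_eq, hq.isSelfAdjoint.star_eq, sq]
  have hle : ∀ k : ℕ, ‖p * q * p‖ ^ 2 ^ k ≤ ‖(p * q) ^ 2 ^ k‖ := fun k ↦ by
    obtain ⟨n, hn⟩ := Nat.exists_eq_add_one.mpr (Nat.two_pow_pos k)
    calc ‖p * q * p‖ ^ 2 ^ k = ‖(p * q) ^ 2 ^ k * p‖ := by
          rw [← hsa.norm_pow_two_pow, hn, hp.isIdempotentElem.mul_mul_self_pow_succ]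
      _ ≤ ‖(p * q) ^ 2 ^ k‖ * ‖p‖ := norm_mul_le _ _
      _ ≤ ‖(p * q) ^ 2 ^ k‖ := mul_le_of_le_one_right (norm_nonneg _) hp.norm_le
  have h2k : Tendsto (fun k ↦ ‖(p * q) ^ 2 ^ k‖) atTop (𝓝 0) := by
    simpa using (h.comp (tendsto_pow_atTop_atTop_of_one_lt one_lt_two)).norm
  obtain ⟨k, hk⟩ := (h2k.eventually (gt_mem_nhds one_pos)).exists
  have : ‖p * q * p‖ < 1 :=
    (pow_lt_one_iff_of_nonneg (norm_nonneg _) (by positivity)).mp ((hle k).trans_lt hk)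
  rw [← hsq] at this
  exact (pow_lt_one_iff_of_nonneg (norm_nonneg _) two_ne_zero).mp this

theorem ContinuousLinearMap.tendsto_pow_nhds_zero_of_cauchySeq {𝕜 E : Type*}
    [NontriviallyNormedField 𝕜] [NormedAddCommGroup E] [NormedSpace 𝕜 E] [CompleteSpace E]
    {T : E →L[𝕜] E} (h : CauchySeq fun n ↦ T ^ n) (hfix : ∀ x, T x = x → x = 0) :
    Tendsto (fun n ↦ T ^ n) atTop (𝓝 0) := by
  obtain ⟨S, hS⟩ := cauchySeq_tendsto_of_complete h
  have hTS : T * S = S := by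
    refine tendsto_nhds_unique (tendsto_const_nhds.mul hS) ?_
    simpa only [pow_succ'] using (tendsto_add_atTop_iff_nat 1).mpr hS
  have hS0 : S = 0 := by
    ext x
    exact hfix (S x) congr($hTS x)
  rwa [← hS0]

namespace Submodule

variable {𝕜 H : Type*} [RCLike 𝕜] [NormedAddCommGroup H] [InnerProductSpace 𝕜 H]

instance completeSpace_inf [CompleteSpace H] (K₁ K₂ : Submodule 𝕜 H) [CompleteSpace K₁]
    [CompleteSpace K₂] : CompleteSpace ↥(K₁ ⊓ K₂) :=
  ((completeSpace_coe_iff_isComplete.mp ‹CompleteSpace K₁›).isClosed.inter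
    (completeSpace_coe_iff_isComplete.mp ‹CompleteSpace K₂›).isClosed).completeSpace_coe

theorem eq_starProjection_of_forall_mem {K : Submodule 𝕜 H} [K.HasOrthogonalProjection]
    {T : H →L[𝕜] H} (h : ∀ x, T x ∈ K ∧ x - T x ∈ Kᗮ) : T = K.starProjection :=
  ContinuousLinearMap.ext fun x ↦ (eq_starProjection_of_mem_orthogonal (h x).1 (h x).2).symm

theorem mem_inf_of_starProjection_starProjection_eq_self {K₁ K₂ : Submodule 𝕜 H}
    [K₁.HasOrthogonalProjection] [K₂.HasOrthogonalProjection] {y : H}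
    (h : K₁.starProjection (K₂.starProjection y) = y) : y ∈ K₁ ⊓ K₂ := by
  have h₂ : y ∈ K₂ := by
    refine (K₂.mem_iff_norm_starProjection y).mpr
      (le_antisymm (norm_starProjection_apply_le _ _) ?_)
    calc ‖y‖ = ‖K₁.starProjection (K₂.starProjection y)‖ := by rw [h]
      _ ≤ ‖K₂.starProjection y‖ := norm_starProjection_apply_le _ _
  rw [starProjection_eq_self_iff.mpr h₂, starProjection_eq_self_iff] at h
  exact ⟨h, h₂⟩

theorem one_sub_norm_starProjection_mul_mul_norm_le {K₁ K₂ : Submodule 𝕜 H}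
    [K₁.HasOrthogonalProjection] [K₂.HasOrthogonalProjection] {m n : H} (hm : m ∈ K₁)
    (hn : n ∈ K₂) : (1 - ‖K₂.starProjection * K₁.starProjection‖) * ‖m‖ ≤ ‖m + n‖ := by
  have hq : ‖K₂.starProjection m‖ ≤ ‖K₂.starProjection * K₁.starProjection‖ * ‖m‖ := by
    simpa [starProjection_eq_self_iff.mpr hm] using
      (K₂.starProjection * K₁.starProjection).le_opNorm m
  have hsub : m - K₂.starProjection m = K₂ᗮ.starProjection (m + n) := by
    rw [starProjection_orthogonal_val, map_add, starProjection_eq_self_iff.mpr hn]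
    abel
  have : ‖m - K₂.starProjection m‖ ≤ ‖m + n‖ := hsub ▸ norm_starProjection_apply_le _ _
  nlinarith [norm_sub_norm_le m (K₂.starProjection m)]

theorem norm_starProjection_mul_comm [CompleteSpace H] (K₁ K₂ : Submodule 𝕜 H)
    [K₁.HasOrthogonalProjection] [K₂.HasOrthogonalProjection] :
    ‖K₁.starProjection * K₂.starProjection‖ = ‖K₂.starProjection * K₁.starProjection‖ := by
  rw [← norm_star, star_mul, (isSelfAdjoint_starProjection K₁).star_eq,
    (isSelfAdjoint_starProjection K₂).star_eq]

theorem range_subtypeL_coprod_subtypeL (K₁ K₂ : Submodule 𝕜 H) :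
    Set.range (K₁.subtypeL.coprod K₂.subtypeL) = ((K₁ ⊔ K₂ : Submodule 𝕜 H) : Set H) := by
  rw [← ContinuousLinearMap.range_toLinearMap, ← LinearMap.coe_range,
    ContinuousLinearMap.range_coprod]
  simp

theorem isClosed_sup_of_norm_starProjection_mul_lt_one [CompleteSpace H]
    {K₁ K₂ : Submodule 𝕜 H} [CompleteSpace K₁] [CompleteSpace K₂]
    (h : ‖K₁.starProjection * K₂.starProjection‖ < 1) :
    IsClosed ((K₁ ⊔ K₂ : Submodule 𝕜 H) : Set H) := by
  set c := ‖K₁.starProjection * K₂.starProjection‖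
  have hc : 0 < 1 - c := sub_pos.mpr h
  have hbound : ∀ x : K₁ × K₂, ‖x‖ ≤ (⟨(1 - c)⁻¹, by positivity⟩ : NNReal) *
      ‖K₁.subtypeL.coprod K₂.subtypeL x‖ := by
    rintro ⟨⟨m, hm⟩, ⟨n, hn⟩⟩
    simp only [Prod.norm_mk, ContinuousLinearMap.coprod_apply, coe_subtypeL, coe_subtype,
      max_le_iff]
    refine ⟨(le_inv_mul_iff₀ hc).mpr ?_, (le_inv_mul_iff₀ hc).mpr ?_⟩
    · simpa [c, norm_starProjection_mul_comm K₁] using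
        one_sub_norm_starProjection_mul_mul_norm_le hm hn
    · simpa [c, add_comm n] using one_sub_norm_starProjection_mul_mul_norm_le hn hm
  rw [← range_subtypeL_coprod_subtypeL]
  exact ((K₁.subtypeL.coprod K₂.subtypeL).antilipschitz_of_bound hbound).isClosed_range
    (ContinuousLinearMap.uniformContinuous _)

theorem exists_norm_le_mul_norm_add_of_isClosed_sup [CompleteSpace H]
    {K₁ K₂ : Submodule 𝕜 H} [CompleteSpace K₁] [CompleteSpace K₂] (hdisj : K₁ ⊓ K₂ = ⊥)
    (h : IsClosed ((K₁ ⊔ K₂ : Submodule 𝕜 H) : Set H)) :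
    ∃ C : ℝ, 1 ≤ C ∧ ∀ m ∈ K₁, ∀ n ∈ K₂, ‖m‖ ≤ C * ‖m + n‖ := by
  set f := K₁.subtypeL.coprod K₂.subtypeL
  have hinj : Function.Injective f :=
    LinearMap.ker_eq_bot.mp <| by
      simp only [f, ContinuousLinearMap.coe_coprod]
      rw [LinearMap.ker_coprod_of_disjoint_range _ _ (by simpa [disjoint_iff] using hdisj)]
      simp
  obtain ⟨C, hC⟩ := f.antilipschitz_of_injective_of_isClosed_range hinj
    (range_subtypeL_coprod_subtypeL K₁ K₂ ▸ h)
  refine ⟨C + 1, by simp, fun m hm n hn ↦ ?_⟩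
  calc ‖m‖ ≤ ‖((⟨m, hm⟩ : K₁), (⟨n, hn⟩ : K₂))‖ := le_max_left _ _
    _ ≤ C * ‖m + n‖ := hC.le_mul_norm (map_zero f) _
    _ ≤ (C + 1) * ‖m + n‖ := by gcongr; simp

theorem norm_starProjection_mul_lt_one_of_norm_le_mul_norm_sub {K₁ K₂ : Submodule 𝕜 H}
    [K₁.HasOrthogonalProjection] [K₂.HasOrthogonalProjection] {C : ℝ} (hC : 1 ≤ C)
    (h : ∀ m ∈ K₁, ‖m‖ ≤ C * ‖m - K₂.starProjection m‖) :
    ‖K₂.starProjection * K₁.starProjection‖ < 1 := by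
  set k := √(1 - (C ^ 2)⁻¹)
  have hk : k < 1 := by
    rw [Real.sqrt_lt' one_pos]
    have : 0 < (C ^ 2)⁻¹ := by positivity
    linarith
  have hk2 : k ^ 2 = 1 - (C ^ 2)⁻¹ :=
    Real.sq_sqrt (sub_nonneg.mpr (inv_le_one_of_one_le₀ (one_le_pow₀ hC)))
  have hm : ∀ m ∈ K₁, ‖K₂.starProjection m‖ ≤ k * ‖m‖ := fun m hm ↦ by
    have hpyth := norm_sq_eq_add_norm_sq_starProjection m K₂
    rw [starProjection_orthogonal_val] at hpyth
    have h₁ : (C ^ 2)⁻¹ * ‖m‖ ^ 2 ≤ ‖m - K₂.starProjection m‖ ^ 2 := by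
      rw [inv_mul_le_iff₀ (by positivity), ← mul_pow]
      gcongr
      exact h m hm
    refine (pow_le_pow_iff_left₀ (norm_nonneg _) (by positivity) two_ne_zero).mp ?_
    rw [mul_pow, hk2]
    linarith
  refine (ContinuousLinearMap.opNorm_le_bound _ (Real.sqrt_nonneg _) fun x ↦ ?_).trans_lt hk
  calc ‖K₂.starProjection (K₁.starProjection x)‖ ≤ k * ‖K₁.starProjection x‖ :=
        hm _ (K₁.starProjection_apply_mem x)
    _ ≤ k * ‖x‖ := by gcongr; exact norm_starProjection_apply_le _ _

theorem norm_starProjection_mul_lt_one_of_isClosed_sup [CompleteSpace H]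
    {K₁ K₂ : Submodule 𝕜 H} [CompleteSpace K₁] [CompleteSpace K₂] (hdisj : K₁ ⊓ K₂ = ⊥)
    (h : IsClosed ((K₁ ⊔ K₂ : Submodule 𝕜 H) : Set H)) :
    ‖K₁.starProjection * K₂.starProjection‖ < 1 := by
  obtain ⟨C, hC, hbound⟩ := exists_norm_le_mul_norm_add_of_isClosed_sup hdisj h
  rw [norm_starProjection_mul_comm]
  refine norm_starProjection_mul_lt_one_of_norm_le_mul_norm_sub hC fun m hm ↦ ?_
  simpa [sub_eq_add_neg] using hbound m hm _ (K₂.neg_mem (K₂.starProjection_apply_mem m))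

theorem starProjection_mul_starProjection_of_le {U V : Submodule 𝕜 H}
    [U.HasOrthogonalProjection] [V.HasOrthogonalProjection] (h : U ≤ V) :
    V.starProjection * U.starProjection = U.starProjection := by
  ext x
  exact starProjection_eq_self_iff.mpr (h (U.starProjection_apply_mem x))

theorem starProjection_inf_orthogonal {K L : Submodule 𝕜 H} [K.HasOrthogonalProjection]
    [L.HasOrthogonalProjection] [(K ⊓ Lᗮ).HasOrthogonalProjection] (h : L ≤ K) :
    (K ⊓ Lᗮ).starProjection = K.starProjection - L.starProjection := by
  ext x
  refine eq_starProjection_of_mem_orthogonal ⟨?_, ?_⟩ ?_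
  · exact sub_mem (K.starProjection_apply_mem x) (h (L.starProjection_apply_mem x))
  · change _ ∈ Lᗮ
    rw [← starProjection_apply_eq_zero_iff, sub_apply, map_sub,
      ← ContinuousLinearMap.comp_apply, starProjection_comp_starProjection_of_le h,
      starProjection_eq_self_iff.mpr (L.starProjection_apply_mem x), sub_self]
  · rw [sub_apply, sub_sub_eq_add_sub, add_sub_right_comm]
    exact add_mem (orthogonal_le inf_le_left (K.sub_starProjection_mem_orthogonal x))
      (orthogonal_le inf_le_right (L.le_orthogonal_orthogonal (L.starProjection_apply_mem x)))

theorem inf_orthogonal_sup_inf_orthogonal {K₁ K₂ L : Submodule 𝕜 H} [L.HasOrthogonalProjection]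
    (h₁ : L ≤ K₁) (h₂ : L ≤ K₂) : K₁ ⊓ Lᗮ ⊔ K₂ ⊓ Lᗮ = (K₁ ⊔ K₂) ⊓ Lᗮ := by
  have hX : Lᗮ ⊓ K₁ ⊔ Lᗮ ⊓ K₂ ≤ Lᗮ := sup_le inf_le_left inf_le_left
  calc K₁ ⊓ Lᗮ ⊔ K₂ ⊓ Lᗮ = Lᗮ ⊓ K₁ ⊔ Lᗮ ⊓ K₂ ⊔ L ⊓ Lᗮ := by
        rw [L.inf_orthogonal_eq_bot, sup_bot_eq, inf_comm K₁, inf_comm K₂]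
    _ = (Lᗮ ⊓ K₁ ⊔ Lᗮ ⊓ K₂ ⊔ L) ⊓ Lᗮ := (sup_inf_assoc_of_le L hX).symm
    _ = (K₁ ⊔ K₂) ⊓ Lᗮ := by
      conv_rhs => rw [← sup_orthogonal_inf_of_hasOrthogonalProjection h₁,
        ← sup_orthogonal_inf_of_hasOrthogonalProjection h₂, sup_sup_sup_comm, sup_idem, sup_comm]

theorem isClosed_iff_isClosed_inf_orthogonal {S L : Submodule 𝕜 H} [L.HasOrthogonalProjection]
    (h : L ≤ S) : IsClosed (S : Set H) ↔ IsClosed ((S ⊓ Lᗮ : Submodule 𝕜 H) : Set H) := by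
  refine ⟨fun hS ↦ hS.inter (isClosed_orthogonal L), fun hS ↦ ?_⟩
  have : (S : Set H) = Lᗮ.starProjection ⁻¹' (S ⊓ Lᗮ : Submodule 𝕜 H) := by
    ext x
    simp only [Set.mem_preimage, SetLike.mem_coe, mem_inf, starProjection_orthogonal_val,
      L.sub_starProjection_mem_orthogonal, and_true]
    exact (S.sub_mem_iff_left (h (L.starProjection_apply_mem x))).symm
  rw [this]
  exact hS.preimage (ContinuousLinearMap.continuous _)

theorem inf_orthogonal_inf_inf_orthogonal_eq_bot (M N : Submodule 𝕜 H) :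
    M ⊓ (M ⊓ N)ᗮ ⊓ (N ⊓ (M ⊓ N)ᗮ) = ⊥ := by
  rw [inf_inf_inf_comm, inf_idem, inf_orthogonal_eq_bot]

section TwoSubspaces

variable [CompleteSpace H] {M N : Submodule 𝕜 H} [CompleteSpace M] [CompleteSpace N]

theorem starProjection_mul_pow_succ_sub_starProjection_inf (n : ℕ) :
    (M.starProjection * N.starProjection) ^ (n + 1) - (M ⊓ N).starProjection =
      ((M ⊓ (M ⊓ N)ᗮ).starProjection * (N ⊓ (M ⊓ N)ᗮ).starProjection) ^ (n + 1) := by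
  rw [starProjection_inf_orthogonal inf_le_left, starProjection_inf_orthogonal inf_le_right]
  set E := (M ⊓ N).starProjection
  have hE : IsIdempotentElem E := (M ⊓ N).isIdempotentElem_starProjection
  have hME : M.starProjection * E = E := starProjection_mul_starProjection_of_le inf_le_left
  have hNE : N.starProjection * E = E := starProjection_mul_starProjection_of_le inf_le_right
  have hEM : E * M.starProjection = E := starProjection_comp_starProjection_of_le inf_le_left
  have hEN : E * N.starProjection = E := starProjection_comp_starProjection_of_le inf_le_right
  have hprod : (M.starProjection - E) * (N.starProjection - E) =
      M.starProjection * N.starProjection - E := by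
    rw [sub_mul, mul_sub, mul_sub, hME, hEN, hE.eq]
    abel
  rw [hprod, hE.sub_pow_succ (by rw [mul_assoc, hNE, hME]) (by rw [← mul_assoc, hEM, hEN])]

theorem isClosed_sup_iff_norm_lt_one :
    IsClosed ((M ⊔ N : Submodule 𝕜 H) : Set H) ↔
      ‖(M ⊓ (M ⊓ N)ᗮ).starProjection * (N ⊓ (M ⊓ N)ᗮ).starProjection‖ < 1 := by
  rw [isClosed_iff_isClosed_inf_orthogonal (L := M ⊓ N) (inf_le_left.trans le_sup_left),
    ← inf_orthogonal_sup_inf_orthogonal inf_le_left inf_le_right]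
  exact ⟨norm_starProjection_mul_lt_one_of_isClosed_sup
    (inf_orthogonal_inf_inf_orthogonal_eq_bot M N), isClosed_sup_of_norm_starProjection_mul_lt_one⟩

theorem tendsto_starProjection_mul_pow_of_isClosed_sup
    (h : IsClosed ((M ⊔ N : Submodule 𝕜 H) : Set H)) :
    Tendsto (fun n ↦ (M.starProjection * N.starProjection) ^ (n + 1)) atTop
      (𝓝 (M ⊓ N).starProjection) := by
  rw [← tendsto_sub_nhds_zero_iff]
  simp_rw [starProjection_mul_pow_succ_sub_starProjection_inf]
  exact (tendsto_add_atTop_iff_nat 1).mpr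
    (tendsto_pow_atTop_nhds_zero_of_norm_lt_one (isClosed_sup_iff_norm_lt_one.mp h))

theorem isClosed_sup_of_cauchySeq_starProjection_mul_pow
    (h : CauchySeq fun n ↦ (M.starProjection * N.starProjection) ^ (n + 1)) :
    IsClosed ((M ⊔ N : Submodule 𝕜 H) : Set H) := by
  rw [isClosed_sup_iff_norm_lt_one]
  refine isStarProjection_starProjection.norm_mul_lt_one_of_tendsto_pow
    isStarProjection_starProjection ?_
  refine ContinuousLinearMap.tendsto_pow_nhds_zero_of_cauchySeq ?_ fun x hx ↦ ?_
  · rw [← cauchySeq_shift 1]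
    simpa only [← sub_eq_add_neg, starProjection_mul_pow_succ_sub_starProjection_inf] using
      h.add_const (x := -(M ⊓ N).starProjection)
  · simpa [inf_orthogonal_inf_inf_orthogonal_eq_bot] using
      mem_inf_of_starProjection_starProjection_eq_self hx

end TwoSubspaces

end Submodule

/-- Two-projection theorem in a Hilbert space: for closed subspaces `M, N` with orthogonal
projections `P, Q`, the sequence `(PQ)ⁿ` (n ≥ 1) is operator-norm Cauchy iff `M + N` is
closed, and in that case it converges in operator norm to the orthogonal projection onto
`M ∩ N`. -/
theorem stmt_7 {H : Type*} [NormedAddCommGroup H] [InnerProductSpace ℂ H] [CompleteSpace H]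
    (M N : Submodule ℂ H) (hM : IsClosed (M : Set H)) (hN : IsClosed (N : Set H))
    (P Q : H →L[ℂ] H)
    (hP : ∀ x : H, P x ∈ M ∧ x - P x ∈ Mᗮ)
    (hQ : ∀ x : H, Q x ∈ N ∧ x - Q x ∈ Nᗮ) :
    (CauchySeq (fun n : ℕ => (P * Q) ^ (n + 1)) ↔
      IsClosed ((M ⊔ N : Submodule ℂ H) : Set H)) ∧
    (IsClosed ((M ⊔ N : Submodule ℂ H) : Set H) →
      ∀ R : H →L[ℂ] H, (∀ x : H, R x ∈ M ⊓ N ∧ x - R x ∈ (M ⊓ N)ᗮ) →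
        Tendsto (fun n : ℕ => (P * Q) ^ (n + 1)) atTop (𝓝 R)) := by
  have := hM.completeSpace_coe
  have := hN.completeSpace_coe
  obtain rfl := Submodule.eq_starProjection_of_forall_mem hP
  obtain rfl := Submodule.eq_starProjection_of_forall_mem hQ
  refine ⟨⟨Submodule.isClosed_sup_of_cauchySeq_starProjection_mul_pow,
    fun h ↦ (Submodule.tendsto_starProjection_mul_pow_of_isClosed_sup h).cauchySeq⟩, ?_⟩
  intro h R hR
  rw [Submodule.eq_starProjection_of_forall_mem hR]
  exact Submodule.tendsto_starProjection_mul_pow_of_isClosed_sup h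
end

section
/- Let H be a complex Hilbert space, M and N closed subspaces of H with M + N closed, and P, Q the orthogonal projections of H onto M and N. Write Π := P_{M∩N} for the orthogonal projection onto M ∩ N. Then the operator 1 + Π − PQ is invertible in the algebra of bounded operators on H, and (1 + Π − PQ)⁻¹ = ∑_{n=0}^∞ (PQ − Π)ⁿ = Π + ∑_{n=0}^∞ (PQ)ⁿ(1 − Π), where both series converge in operator norm. -/
/-!
Since `Π` projects onto `M ∩ N`, it is absorbed by `P` and `Q` on both sides, so
`PQ - Π = P (1 - Π) Q` and `(PQ - Π)ⁿ = (PQ)ⁿ (1 - Π)` for `n ≥ 1`. Both series are therefore the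
Neumann series of `1 - (PQ - Π)`, and everything reduces to `‖PQ - Π‖ < 1`. This is where
closedness of `M + N` enters: the open mapping theorem for the sum map `M × N → M + N` gives
`‖x‖ ≤ C ‖x - y‖` for `x ∈ N ⊖ (M ∩ N)` and `y ∈ M`, so by Pythagoras
`‖P x‖² ≤ (1 - C⁻²) ‖x‖²` there, and `(1 - Π) Q` maps `H` contractively into `N ⊖ (M ∩ N)`.
-/

open Filter Topology

section IdempotentPerturbation

variable {A : Type*} [Ring A] {S R : A}

theorem pow_succ_sub_eq_of_isIdempotentElem (hR : IsIdempotentElem R) (hSR : S * R = R)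
    (hRS : R * S = R) (n : ℕ) : (S - R) ^ (n + 1) = S ^ (n + 1) * (1 - R) := by
  have hfac : S - R = S * (1 - R) := by rw [mul_sub, mul_one, hSR]
  have hcomm : Commute S (1 - R) := by
    rw [Commute, SemiconjBy, ← hfac, sub_mul, one_mul, hRS]
  rw [hfac, hcomm.mul_pow, hR.one_sub.pow_succ_eq]

theorem sum_range_succ_pow_sub_eq_of_isIdempotentElem (hR : IsIdempotentElem R)
    (hSR : S * R = R) (hRS : R * S = R) (m : ℕ) :
    ∑ n ∈ Finset.range (m + 1), (S - R) ^ n =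
      R + ∑ n ∈ Finset.range (m + 1), S ^ n * (1 - R) := by
  simp only [Finset.sum_range_succ', pow_succ_sub_eq_of_isIdempotentElem hR hSR hRS, pow_zero,
    one_mul]
  abel

end IdempotentPerturbation

theorem exists_inverse_one_add_sub_of_norm_sub_lt_one {A : Type*} [NormedRing A]
    [HasSummableGeomSeries A] {S R : A} (hR : IsIdempotentElem R) (hSR : S * R = R)
    (hRS : R * S = R) (h : ‖S - R‖ < 1) :
    ∃ T : A, (1 + R - S) * T = 1 ∧ T * (1 + R - S) = 1 ∧
      Tendsto (fun m : ℕ => ∑ n ∈ Finset.range m, (S - R) ^ n) atTop (𝓝 T) ∧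
      Tendsto (fun m : ℕ => R + ∑ n ∈ Finset.range m, S ^ n * (1 - R)) atTop (𝓝 T) := by
  have hsub : 1 + R - S = 1 - (S - R) := by abel
  have hsum := (summable_geometric_of_norm_lt_one h).hasSum.tendsto_sum_nat
  refine ⟨∑' n, (S - R) ^ n, ?_, ?_, hsum, ?_⟩
  · rw [hsub]; exact mul_neg_geom_series _ h
  · rw [hsub]; exact geom_series_mul_neg _ h
  · rw [← tendsto_add_atTop_iff_nat 1]
    simpa only [sum_range_succ_pow_sub_eq_of_isIdempotentElem hR hSR hRS] using
      (tendsto_add_atTop_iff_nat 1).mpr hsum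

namespace Submodule

theorem exists_add_eq_norm_le_of_mem_sup {𝕜 E : Type*} [NontriviallyNormedField 𝕜]
    [NormedAddCommGroup E] [NormedSpace 𝕜 E] (M N : Submodule 𝕜 E) [CompleteSpace M]
    [CompleteSpace N] [CompleteSpace ↥(M ⊔ N)] :
    ∃ C > 0, ∀ z ∈ M ⊔ N, ∃ x ∈ M, ∃ y ∈ N, x + y = z ∧ ‖x‖ ≤ C * ‖z‖ ∧ ‖y‖ ≤ C * ‖z‖ := by
  let f : M × N →L[𝕜] ↥(M ⊔ N) := (M.subtypeL.coprod N.subtypeL).codRestrict (M ⊔ N)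
    fun p => add_mem (mem_sup_left p.1.2) (mem_sup_right p.2.2)
  have hf : Function.Surjective f := by
    rintro ⟨z, hz⟩
    obtain ⟨x, hx, y, hy, rfl⟩ := mem_sup.mp hz
    exact ⟨(⟨x, hx⟩, ⟨y, hy⟩), rfl⟩
  obtain ⟨C, hC, hpre⟩ := f.exists_preimage_norm_le hf
  refine ⟨C, hC, fun z hz => ?_⟩
  obtain ⟨⟨x, y⟩, hxy, hnorm⟩ := hpre ⟨z, hz⟩
  exact ⟨x, x.2, y, y.2, congrArg Subtype.val hxy, (norm_fst_le _).trans hnorm,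
    (norm_snd_le _).trans hnorm⟩

variable {𝕜 E : Type*} [RCLike 𝕜] [NormedAddCommGroup E] [InnerProductSpace 𝕜 E]

theorem norm_le_norm_add_of_mem_orthogonal {K : Submodule 𝕜 E} {x w : E}
    (hx : x ∈ Kᗮ) (hw : w ∈ K) : ‖x‖ ≤ ‖x + w‖ := by
  have h := norm_add_sq_eq_norm_sq_add_norm_sq_of_inner_eq_zero x w
    (K.inner_left_of_mem_orthogonal hw hx)
  rw [mul_self_le_mul_self_iff (norm_nonneg _) (norm_nonneg _), h]
  exact le_add_of_nonneg_right (mul_self_nonneg _)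

theorem exists_norm_le_mul_norm_sub_of_mem_inf_orthogonal (M N : Submodule 𝕜 E)
    [CompleteSpace M] [CompleteSpace N] [CompleteSpace ↥(M ⊔ N)] :
    ∃ C > 0, ∀ x ∈ N, x ∈ (M ⊓ N)ᗮ → ∀ y ∈ M, ‖x‖ ≤ C * ‖x - y‖ := by
  obtain ⟨C, hC, hdec⟩ := M.exists_add_eq_norm_le_of_mem_sup N
  refine ⟨C, hC, fun x hxN hxo y hyM => ?_⟩
  obtain ⟨a, haM, b, hbN, hab, -, hb⟩ :=
    hdec (x - y) (sub_mem (mem_sup_right hxN) (mem_sup_left hyM))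
  have hbx : b - x ∈ M ⊓ N := by
    refine ⟨?_, sub_mem hbN hxN⟩
    rw [show b - x = -(a + y) by rw [eq_neg_iff_add_eq_zero, ← sub_eq_zero.mpr hab]; abel]
    exact neg_mem (add_mem haM hyM)
  calc ‖x‖ ≤ ‖x + (b - x)‖ := norm_le_norm_add_of_mem_orthogonal hxo hbx
    _ = ‖b‖ := by rw [add_sub_cancel]
    _ ≤ C * ‖x - y‖ := hb

theorem exists_norm_starProjection_le_of_mem_inf_orthogonal (M N : Submodule 𝕜 E)
    [CompleteSpace M] [CompleteSpace N] [CompleteSpace ↥(M ⊔ N)] :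
    ∃ δ < 1, 0 ≤ δ ∧ ∀ x ∈ N, x ∈ (M ⊓ N)ᗮ → ‖M.starProjection x‖ ≤ δ * ‖x‖ := by
  obtain ⟨C, hC, hdist⟩ := M.exists_norm_le_mul_norm_sub_of_mem_inf_orthogonal N
  refine ⟨√(1 - C⁻¹ ^ 2), ?_, Real.sqrt_nonneg _, fun x hxN hxo => ?_⟩
  · rw [Real.sqrt_lt' one_pos]
    have := pow_pos (inv_pos.mpr hC) 2
    linarith
  have hpyth := norm_sq_eq_add_norm_sq_starProjection x M
  rw [starProjection_orthogonal_val] at hpyth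
  have hfar : (C⁻¹ * ‖x‖) ^ 2 ≤ ‖x - M.starProjection x‖ ^ 2 := by
    gcongr
    rw [inv_mul_le_iff₀ hC]
    exact hdist x hxN hxo _ (M.starProjection_apply_mem x)
  have hsq : ‖M.starProjection x‖ ^ 2 ≤ (1 - C⁻¹ ^ 2) * ‖x‖ ^ 2 := by
    linear_combination hfar - hpyth
  calc ‖M.starProjection x‖ = √(‖M.starProjection x‖ ^ 2) := (Real.sqrt_sq (norm_nonneg _)).symm
    _ ≤ √((1 - C⁻¹ ^ 2) * ‖x‖ ^ 2) := Real.sqrt_le_sqrt hsq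
    _ = √(1 - C⁻¹ ^ 2) * ‖x‖ := by
      rw [Real.sqrt_mul' _ (sq_nonneg _), Real.sqrt_sq (norm_nonneg _)]

section Absorption

variable {U V : Submodule 𝕜 E} [U.HasOrthogonalProjection] [V.HasOrthogonalProjection]

theorem starProjection_mul_starProjection_eq_left_of_le (h : U ≤ V) :
    U.starProjection * V.starProjection = U.starProjection :=
  starProjection_comp_starProjection_of_le h

theorem starProjection_mul_starProjection_eq_right_of_le (h : U ≤ V) :
    V.starProjection * U.starProjection = U.starProjection :=
  ContinuousLinearMap.ext fun x =>
    V.starProjection_eq_self_iff.mpr (h (U.starProjection_apply_mem x))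

end Absorption

theorem norm_starProjection_mul_sub_starProjection_inf_lt_one (M N : Submodule 𝕜 E)
    [CompleteSpace M] [CompleteSpace N] [CompleteSpace ↥(M ⊔ N)]
    [(M ⊓ N).HasOrthogonalProjection] :
    ‖M.starProjection * N.starProjection - (M ⊓ N).starProjection‖ < 1 := by
  obtain ⟨δ, hδ1, hδ0, hδ⟩ := M.exists_norm_starProjection_le_of_mem_inf_orthogonal N
  refine (ContinuousLinearMap.opNorm_le_bound _ hδ0 fun z => ?_).trans_lt hδ1
  set w := (M ⊓ N)ᗮ.starProjection (N.starProjection z) with hw_def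
  have hwN : w ∈ N := by
    rw [hw_def, starProjection_orthogonal_val]
    exact sub_mem (N.starProjection_apply_mem z)
      (mem_inf.mp ((M ⊓ N).starProjection_apply_mem _)).2
  have hRQ : (M ⊓ N).starProjection (N.starProjection z) = (M ⊓ N).starProjection z :=
    DFunLike.congr_fun (starProjection_mul_starProjection_eq_left_of_le inf_le_right) z
  have hPR : M.starProjection ((M ⊓ N).starProjection z) = (M ⊓ N).starProjection z :=
    DFunLike.congr_fun (starProjection_mul_starProjection_eq_right_of_le inf_le_left) z
  have hw : (M.starProjection * N.starProjection - (M ⊓ N).starProjection) z =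
      M.starProjection w := by
    simp only [hw_def, starProjection_orthogonal_val, map_sub, sub_apply, mul_apply_eq_comp,
      hRQ, hPR]
  calc ‖(M.starProjection * N.starProjection - (M ⊓ N).starProjection) z‖
      = ‖M.starProjection w‖ := by rw [hw]
    _ ≤ δ * ‖w‖ := hδ w hwN (starProjection_apply_mem _ _)
    _ ≤ δ * ‖N.starProjection z‖ := by gcongr; exact norm_starProjection_apply_le _ _
    _ ≤ δ * ‖z‖ := by gcongr; exact norm_starProjection_apply_le _ _

theorem eq_starProjection_of_forall_mem_orthogonal {K : Submodule 𝕜 E}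
    [K.HasOrthogonalProjection] {T : E →L[𝕜] E} (hT : ∀ x, T x ∈ K ∧ x - T x ∈ Kᗮ) :
    T = K.starProjection :=
  ContinuousLinearMap.ext fun x => (eq_starProjection_of_mem_orthogonal (hT x).1 (hT x).2).symm

end Submodule

/-- For closed subspaces `M, N` of a Hilbert space with `M + N` closed, orthogonal
projections `P, Q` and `Π = R` the orthogonal projection onto `M ∩ N`, the operator
`1 + Π - PQ` is invertible with inverse `∑ (PQ - Π)ⁿ = Π + ∑ (PQ)ⁿ(1 - Π)`, both series
converging in operator norm. -/
theorem stmt_10 {H : Type*} [NormedAddCommGroup H] [InnerProductSpace ℂ H] [CompleteSpace H]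
    (M N : Submodule ℂ H) (hM : IsClosed (M : Set H)) (hN : IsClosed (N : Set H))
    (hMN : IsClosed ((M ⊔ N : Submodule ℂ H) : Set H))
    (P Q R : H →L[ℂ] H)
    (hP : ∀ x : H, P x ∈ M ∧ x - P x ∈ Mᗮ)
    (hQ : ∀ x : H, Q x ∈ N ∧ x - Q x ∈ Nᗮ)
    (hR : ∀ x : H, R x ∈ M ⊓ N ∧ x - R x ∈ (M ⊓ N)ᗮ) :
    ∃ T : H →L[ℂ] H,
      (1 + R - P * Q) * T = 1 ∧ T * (1 + R - P * Q) = 1 ∧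
      Tendsto (fun m : ℕ => ∑ n ∈ Finset.range m, (P * Q - R) ^ n) atTop (𝓝 T) ∧
      Tendsto (fun m : ℕ => R + ∑ n ∈ Finset.range m, (P * Q) ^ n * (1 - R)) atTop (𝓝 T) := by
  have : CompleteSpace M := hM.completeSpace_coe
  have : CompleteSpace N := hN.completeSpace_coe
  have : CompleteSpace ↥(M ⊔ N) := hMN.completeSpace_coe
  have : CompleteSpace ↥(M ⊓ N) := (hM.inter hN).completeSpace_coe
  obtain rfl := Submodule.eq_starProjection_of_forall_mem_orthogonal hP
  obtain rfl := Submodule.eq_starProjection_of_forall_mem_orthogonal hQ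
  obtain rfl := Submodule.eq_starProjection_of_forall_mem_orthogonal hR
  refine exists_inverse_one_add_sub_of_norm_sub_lt_one
    (Submodule.isIdempotentElem_starProjection _) ?_ ?_
    (M.norm_starProjection_mul_sub_starProjection_inf_lt_one N)
  · rw [mul_assoc, Submodule.starProjection_mul_starProjection_eq_right_of_le inf_le_right,
      Submodule.starProjection_mul_starProjection_eq_right_of_le inf_le_left]
  · rw [← mul_assoc, Submodule.starProjection_mul_starProjection_eq_left_of_le inf_le_left,
      Submodule.starProjection_mul_starProjection_eq_left_of_le inf_le_right]
end

section
/- Let H be a complex Hilbert space, P and Q orthogonal projections on H with ranges M and N, and suppose the subgroup Γ of invertible bounded operators on H generated by the self-adjoint unitaries 2P − 1 and 2Q − 1 is finite. Then the sequence (PQ)ⁿ converges in operator norm to the orthogonal projection Π := P_{M∩N} onto M ∩ N, the orthogonal projection Π equals the average (1/|Γ|) ∑_{γ ∈ Γ} γ, and H = (M ∩ N) ⊕ (M⊥ + N⊥). -/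
/-!
The average `E` of the finite group `Γ` is fixed by left multiplication with the generators
`2P - 1` and `2Q - 1`, so its range lies in `M ∩ N`, while `x - γ x ∈ M⊥ + N⊥` for every
`γ ∈ Γ`. Hence `E` is the orthogonal projection onto `M ∩ N`, and `x = E x + (x - E x)`
splits `H` as `(M ∩ N) ⊕ (M⊥ + N⊥)`.

Since `Γ` spans the algebra generated by `P` and `Q`, that algebra is finite-dimensional,
so the positive contraction `PQP` has finite spectrum in `[0, 1]` and, by the continuous
functional calculus, its powers converge. As `(PQ)ⁿ⁺¹ = (PQP)ⁿ PQ`, the powers of `PQ`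
converge as well. Their limit is fixed by `PQ`, so its range lies in `M ∩ N`, and it
differs from the identity by an operator with range in the closed subspace `(M ∩ N)⊥`;
so it is the orthogonal projection onto `M ∩ N`.
-/

open Filter Topology

open Polynomial in
theorem IsIntegral.finite_spectrum {𝕜 A : Type*} [Field 𝕜] [Ring A] [Algebra 𝕜 A] {a : A}
    (ha : IsIntegral 𝕜 a) : (spectrum 𝕜 a).Finite := by
  classical
  nontriviality A
  obtain ⟨f, hmonic, hf⟩ := ha
  refine f.roots.toFinset.finite_toSet.subset fun k hk => ?_
  have hk' := spectrum.subset_polynomial_aeval a f ⟨k, hk, rfl⟩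
  rw [aeval_def, hf, spectrum.zero_eq, Set.mem_singleton_iff] at hk'
  simpa [hmonic.ne_zero] using hk'

theorem isIntegral_of_mem_adjoin_of_finite_closure {R A : Type*} [CommRing R] [Ring A]
    [Algebra R A] {s : Set A} (hs : (Submonoid.closure s : Set A).Finite) {a : A}
    (ha : a ∈ Algebra.adjoin R s) : IsIntegral R a :=
  IsIntegral.of_mem_of_fg _ (by rw [Algebra.adjoin_eq_span]; exact Submodule.fg_span hs) a ha

theorem Finset.mul_sum_eq_of_mapsTo {R : Type*} [Semiring R] {Γ : Finset R} {a : R}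
    (ha : IsLeftRegular a) (h : ∀ γ ∈ Γ, a * γ ∈ Γ) : a * ∑ γ ∈ Γ, γ = ∑ γ ∈ Γ, γ := by
  classical
  have himage : Γ.image (a * ·) = Γ :=
    Finset.eq_of_subset_of_card_le (Finset.image_subset_iff.2 h)
      (Finset.card_image_of_injective _ ha).ge
  calc a * ∑ γ ∈ Γ, γ = ∑ γ ∈ Γ.image (a * ·), γ := by
        rw [Finset.mul_sum, Finset.sum_image fun _ _ _ _ h => ha h]
    _ = ∑ γ ∈ Γ, γ := by rw [himage]

theorem IsIdempotentElem.mul_pow_succ {R : Type*} [Monoid R] {p : R} (hp : IsIdempotentElem p)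
    (q : R) (n : ℕ) : (p * q) ^ (n + 1) = (p * q * p) ^ n * (p * q) := by
  induction n with
  | zero => simp
  | succ n ih =>
    have hpqp : p * q * p * (p * q) = p * q * (p * q) := by
      rw [mul_assoc (p * q) p, ← mul_assoc p p, hp.eq]
    rw [pow_succ, ih, pow_succ, mul_assoc _ (p * q * p), hpqp, mul_assoc]

theorem Set.Finite.tendstoUniformlyOn {α β ι : Type*} [UniformSpace β] {F : ι → α → β}
    {f : α → β} {l : Filter ι} {s : Set α} (hs : s.Finite)
    (h : ∀ x ∈ s, Tendsto (F · x) l (𝓝 (f x))) : TendstoUniformlyOn F f l s := fun _ hu =>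
  hs.eventually_all.2 fun x hx => Uniform.tendsto_nhds_right.1 (h x hx) hu

theorem tendsto_pow_of_nonneg_of_norm_le_one {A : Type*} [CStarAlgebra A] [PartialOrder A]
    [StarOrderedRing A] {a : A} (ha : 0 ≤ a) (ha₁ : ‖a‖ ≤ 1) (hfin : (spectrum ℝ a).Finite) :
    Tendsto (a ^ ·) atTop (𝓝 (cfc (fun x : ℝ => if x = 1 then 1 else 0) a)) := by
  nontriviality A
  have hpow : (a ^ · : ℕ → A) = fun n => cfc (· ^ n : ℝ → ℝ) a :=
    funext fun n => (cfc_pow_id a n (IsSelfAdjoint.of_nonneg ha)).symm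
  rw [hpow]
  refine tendsto_cfc_fun (hfin.tendstoUniformlyOn fun x hx => ?_)
    (Eventually.of_forall fun n => hfin.continuousOn _)
  have hx₀ : 0 ≤ x := spectrum_nonneg_of_nonneg ha hx
  have hx₁ : x ≤ 1 := (Real.le_norm_self x).trans ((spectrum.norm_le_norm_of_mem hx).trans ha₁)
  rcases hx₁.eq_or_lt with rfl | hlt
  · simp
  · simpa [hlt.ne] using tendsto_pow_atTop_nhds_zero_of_lt_one hx₀ hlt

namespace Submodule

section RCLike

variable {𝕜 E : Type*} [RCLike 𝕜] [NormedAddCommGroup E] [InnerProductSpace 𝕜 E]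

theorem sub_apply_mem_of_mem_closure (W : Submodule 𝕜 E) {s : Set (E →L[𝕜] E)}
    (hs : ∀ T ∈ s, ∀ x, x - T x ∈ W) {T : E →L[𝕜] E} (hT : T ∈ Submonoid.closure s) (x : E) :
    x - T x ∈ W := by
  induction hT using Submonoid.closure_induction generalizing x with
  | mem T hT => exact hs T hT x
  | one => simp
  | mul T U _ _ hT hU =>
    rw [mul_apply_eq_comp, ← sub_add_sub_cancel x (U x)]
    exact W.add_mem (hU x) (hT (U x))

theorem sub_smul_sum_apply_mem (W : Submodule 𝕜 E) {Γ : Finset (E →L[𝕜] E)} (hΓ : Γ.Nonempty)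
    (h : ∀ γ ∈ Γ, ∀ x, x - γ x ∈ W) (x : E) :
    x - ((Γ.card : 𝕜)⁻¹ • ∑ γ ∈ Γ, γ) x ∈ W := by
  have hcard : (Γ.card : 𝕜) ≠ 0 := Nat.cast_ne_zero.2 hΓ.card_pos.ne'
  have hx : x - ((Γ.card : 𝕜)⁻¹ • ∑ γ ∈ Γ, γ) x = (Γ.card : 𝕜)⁻¹ • ∑ γ ∈ Γ, (x - γ x) := by
    rw [Finset.sum_sub_distrib, Finset.sum_const, smul_sub, ← Nat.cast_smul_eq_nsmul 𝕜,
      smul_smul, inv_mul_cancel₀ hcard, one_smul, smul_apply, sum_apply]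
  rw [hx]
  exact W.smul_mem _ (W.sum_mem fun γ hγ => h γ hγ x)

variable (K L : Submodule 𝕜 E) [K.HasOrthogonalProjection] [L.HasOrthogonalProjection]

theorem two_smul_starProjection_sub_one_apply (x : E) :
    ((2 : 𝕜) • K.starProjection - 1) x = K.reflection x := by
  rw [reflection_apply, two_smul, two_smul]
  simp

theorem two_smul_starProjection_sub_one_mul_self :
    ((2 : 𝕜) • K.starProjection - 1) * ((2 : 𝕜) • K.starProjection - 1) = 1 :=
  ContinuousLinearMap.ext fun x => by
    simp only [mul_apply_eq_comp, two_smul_starProjection_sub_one_apply, reflection_reflection,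
      one_apply_eq_self]

theorem sub_two_smul_starProjection_sub_one_apply_mem (x : E) :
    x - ((2 : 𝕜) • K.starProjection - 1) x ∈ Kᗮ := by
  have hx : x - ((2 : 𝕜) • K.starProjection - 1) x = (2 : 𝕜) • (x - K.starProjection x) := by
    simp only [sub_apply, smul_apply, one_apply_eq_self, smul_sub]
    module
  rw [hx]
  exact Kᗮ.smul_mem _ (sub_starProjection_mem_orthogonal x)

theorem apply_mem_of_two_smul_starProjection_sub_one_mul_eq {T : E →L[𝕜] E}
    (hT : ((2 : 𝕜) • K.starProjection - 1) * T = T) (x : E) : T x ∈ K := by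
  rw [← K.reflection_eq_self_iff, ← two_smul_starProjection_sub_one_apply (𝕜 := 𝕜),
    ← mul_apply_eq_comp, hT]

theorem average_apply_mem_inf {Γ : Finset (E →L[𝕜] E)}
    (hΓ : (Γ : Set (E →L[𝕜] E)) = Submonoid.closure
      {(2 : 𝕜) • K.starProjection - 1, (2 : 𝕜) • L.starProjection - 1}) (x : E) :
    ((Γ.card : 𝕜)⁻¹ • ∑ γ ∈ Γ, γ) x ∈ K ⊓ L := by
  have hmem : ∀ γ, γ ∈ Γ ↔ γ ∈ Submonoid.closure
      {(2 : 𝕜) • K.starProjection - 1, (2 : 𝕜) • L.starProjection - 1} :=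
    fun γ => Set.ext_iff.1 hΓ γ
  have hfix : ∀ a ∈ ({(2 : 𝕜) • K.starProjection - 1, (2 : 𝕜) • L.starProjection - 1} :
      Set (E →L[𝕜] E)), IsLeftRegular a →
      a * ((Γ.card : 𝕜)⁻¹ • ∑ γ ∈ Γ, γ) = (Γ.card : 𝕜)⁻¹ • ∑ γ ∈ Γ, γ := fun a ha hreg => by
    rw [mul_smul_comm, Finset.mul_sum_eq_of_mapsTo hreg fun γ hγ =>
      (hmem _).2 (mul_mem (Submonoid.subset_closure ha) ((hmem γ).1 hγ))]
  exact ⟨K.apply_mem_of_two_smul_starProjection_sub_one_mul_eq (hfix _ (Set.mem_insert _ _)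
      (isLeftRegular_of_mul_eq_one (K.two_smul_starProjection_sub_one_mul_self))) x,
    L.apply_mem_of_two_smul_starProjection_sub_one_mul_eq (hfix _ (Set.mem_insert_of_mem _ rfl)
      (isLeftRegular_of_mul_eq_one (L.two_smul_starProjection_sub_one_mul_self))) x⟩

theorem sub_average_apply_mem_sup {Γ : Finset (E →L[𝕜] E)}
    (hΓ : (Γ : Set (E →L[𝕜] E)) = Submonoid.closure
      {(2 : 𝕜) • K.starProjection - 1, (2 : 𝕜) • L.starProjection - 1}) (x : E) :
    x - ((Γ.card : 𝕜)⁻¹ • ∑ γ ∈ Γ, γ) x ∈ Kᗮ ⊔ Lᗮ := by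
  refine sub_smul_sum_apply_mem _ ⟨1, (Set.ext_iff.1 hΓ 1).2 (one_mem _)⟩
    (fun γ hγ => sub_apply_mem_of_mem_closure _ ?_ ((Set.ext_iff.1 hΓ γ).1 hγ)) x
  rintro T (rfl | rfl) y
  · exact mem_sup_left (K.sub_two_smul_starProjection_sub_one_apply_mem y)
  · exact mem_sup_right (L.sub_two_smul_starProjection_sub_one_apply_mem y)

theorem mem_inf_of_starProjection_mul_apply_eq {y : E}
    (hy : (K.starProjection * L.starProjection) y = y) : y ∈ K ⊓ L := by
  have hle : ‖y‖ ≤ ‖L.starProjection y‖ := by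
    conv_lhs => rw [← hy]
    exact K.norm_starProjection_apply_le (L.starProjection y)
  have hyL : y ∈ L := (L.mem_iff_norm_starProjection y).2
    (le_antisymm (L.norm_starProjection_apply_le y) hle)
  rw [mul_apply_eq_comp, starProjection_eq_self_iff.2 hyL] at hy
  exact ⟨starProjection_eq_self_iff.1 hy, hyL⟩

theorem eq_starProjection_inf_of_tendsto [(K ⊓ L).HasOrthogonalProjection] {T : E →L[𝕜] E}
    (hT : Tendsto (fun n : ℕ => (K.starProjection * L.starProjection) ^ n) atTop (𝓝 T)) :
    T = (K ⊓ L).starProjection := by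
  have hshift := (tendsto_add_atTop_iff_nat 1).2 hT
  simp only [pow_succ'] at hshift
  have hfix : K.starProjection * L.starProjection * T = T :=
    tendsto_nhds_unique (hT.const_mul _) hshift
  refine eq_starProjection_of_forall_mem_orthogonal fun x =>
    ⟨K.mem_inf_of_starProjection_mul_apply_eq L (by rw [← mul_apply_eq_comp, hfix]), ?_⟩
  refine (isClosed_orthogonal _).mem_of_tendsto
    (tendsto_const_nhds.sub (((ContinuousLinearMap.apply 𝕜 E x).continuous.tendsto T).comp hT))
    (Eventually.of_forall fun n => sub_apply_mem_of_mem_closure _ ?_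
      (pow_mem (mul_mem (Submonoid.subset_closure (Set.mem_insert _ _))
        (Submonoid.subset_closure (Set.mem_insert_of_mem _ rfl))) n) x)
  rintro T (rfl | rfl) x
  · exact orthogonal_le inf_le_left (K.sub_starProjection_mem_orthogonal x)
  · exact orthogonal_le inf_le_right (L.sub_starProjection_mem_orthogonal x)

theorem starProjection_mem_adjoin {s : Set (E →L[𝕜] E)}
    (hs : (2 : 𝕜) • K.starProjection - 1 ∈ s) : K.starProjection ∈ Algebra.adjoin 𝕜 s := by
  have hK : K.starProjection = (2⁻¹ : 𝕜) • ((2 : 𝕜) • K.starProjection - 1 + 1) := by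
    rw [sub_add_cancel, smul_smul, inv_mul_cancel₀ two_ne_zero, one_smul]
  rw [hK]
  exact Subalgebra.smul_mem _ (add_mem (Algebra.subset_adjoin hs) (one_mem _)) _

end RCLike

section Complex

variable {H : Type*} [NormedAddCommGroup H] [InnerProductSpace ℂ H] [CompleteSpace H]
  (K L : Submodule ℂ H) [K.HasOrthogonalProjection] [L.HasOrthogonalProjection]

theorem exists_tendsto_starProjection_mul_pow
    (h : IsIntegral ℂ (K.starProjection * L.starProjection * K.starProjection)) :
    ∃ T, Tendsto (fun n : ℕ => (K.starProjection * L.starProjection) ^ n) atTop (𝓝 T) := by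
  set P := K.starProjection
  set Q := L.starProjection
  have hP : IsStarProjection P := isStarProjection_starProjection
  have hS₀ : 0 ≤ P * Q * P :=
    hP.isSelfAdjoint.conjugate_nonneg isStarProjection_starProjection.nonneg
  have hS₁ : ‖P * Q * P‖ ≤ 1 := norm_mul₃_le.trans <| mul_le_one₀
    (mul_le_one₀ K.starProjection_norm_le (norm_nonneg _) L.starProjection_norm_le)
    (norm_nonneg _) K.starProjection_norm_le
  have hfin : (spectrum ℝ (P * Q * P)).Finite := by
    rw [← spectrum.preimage_algebraMap ℂ]
    exact h.finite_spectrum.preimage Complex.ofReal_injective.injOn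
  refine ⟨cfc (fun x : ℝ => if x = 1 then 1 else 0) (P * Q * P) * (P * Q),
    (tendsto_add_atTop_iff_nat 1).1 ?_⟩
  simp_rw [hP.isIdempotentElem.mul_pow_succ]
  exact (tendsto_pow_of_nonneg_of_norm_le_one hS₀ hS₁ hfin).mul_const _

theorem tendsto_starProjection_mul_pow_of_finite_closure [(K ⊓ L).HasOrthogonalProjection]
    (hfin : (Submonoid.closure {(2 : ℂ) • K.starProjection - 1, (2 : ℂ) • L.starProjection - 1} :
      Set (H →L[ℂ] H)).Finite) :
    Tendsto (fun n : ℕ => (K.starProjection * L.starProjection) ^ n) atTop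
      (𝓝 (K ⊓ L).starProjection) := by
  have hP := K.starProjection_mem_adjoin (Set.mem_insert _ {(2 : ℂ) • L.starProjection - 1})
  have hQ := L.starProjection_mem_adjoin (Set.mem_insert_of_mem ((2 : ℂ) • K.starProjection - 1)
    (Set.mem_singleton _))
  obtain ⟨T, hT⟩ := exists_tendsto_starProjection_mul_pow K L
    (isIntegral_of_mem_adjoin_of_finite_closure hfin (mul_mem (mul_mem hP hQ) hP))
  rwa [← eq_starProjection_inf_of_tendsto K L hT]

end Complex

end Submodule

/-- If the group `Γ` generated by the self-adjoint unitaries `2P - 1` and `2Q - 1` (for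
orthogonal projections `P, Q` with ranges `M, N`) is finite, then `(PQ)ⁿ` converges in
operator norm to the orthogonal projection `Π` onto `M ∩ N`, `Π` equals the average
`(1/|Γ|) ∑_{γ ∈ Γ} γ`, and `H = (M ∩ N) ⊕ (M⊥ + N⊥)`. -/
theorem stmt_12 {H : Type*} [NormedAddCommGroup H] [InnerProductSpace ℂ H] [CompleteSpace H]
    (M N : Submodule ℂ H) (P Q : H →L[ℂ] H)
    (hP : ∀ x : H, P x ∈ M ∧ x - P x ∈ Mᗮ)
    (hQ : ∀ x : H, Q x ∈ N ∧ x - Q x ∈ Nᗮ)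
    (Γ : Finset (H →L[ℂ] H))
    (hΓ : (Γ : Set (H →L[ℂ] H)) =
      ((Submonoid.closure ({(2 : ℂ) • P - 1, (2 : ℂ) • Q - 1} : Set (H →L[ℂ] H)) :
        Submonoid (H →L[ℂ] H)) : Set (H →L[ℂ] H))) :
    (∀ R : H →L[ℂ] H, (∀ x : H, R x ∈ M ⊓ N ∧ x - R x ∈ (M ⊓ N)ᗮ) →
      Tendsto (fun n : ℕ => (P * Q) ^ n) atTop (𝓝 R) ∧
      R = ((Γ.card : ℂ)⁻¹) • ∑ γ ∈ Γ, γ) ∧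
    IsCompl (M ⊓ N) (Mᗮ ⊔ Nᗮ) := by
  have : M.HasOrthogonalProjection := ⟨fun x => ⟨P x, hP x⟩⟩
  have : N.HasOrthogonalProjection := ⟨fun x => ⟨Q x, hQ x⟩⟩
  obtain rfl := Submodule.eq_starProjection_of_forall_mem_orthogonal hP
  obtain rfl := Submodule.eq_starProjection_of_forall_mem_orthogonal hQ
  have hsup : Mᗮ ⊔ Nᗮ ≤ (M ⊓ N)ᗮ :=
    sup_le (Submodule.orthogonal_le inf_le_left) (Submodule.orthogonal_le inf_le_right)
  have hE : ∀ x, ((Γ.card : ℂ)⁻¹ • ∑ γ ∈ Γ, γ) x ∈ M ⊓ N ∧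
      x - ((Γ.card : ℂ)⁻¹ • ∑ γ ∈ Γ, γ) x ∈ Mᗮ ⊔ Nᗮ := fun x =>
    ⟨M.average_apply_mem_inf N hΓ x, M.sub_average_apply_mem_sup N hΓ x⟩
  have : (M ⊓ N).HasOrthogonalProjection := ⟨fun x => ⟨_, (hE x).1, hsup (hE x).2⟩⟩
  refine ⟨fun R hR => ?_, (Submodule.orthogonal_disjoint _).mono_right hsup,
    codisjoint_iff.2 (eq_top_iff.2 fun x _ => ?_)⟩
  · obtain rfl := Submodule.eq_starProjection_of_forall_mem_orthogonal hR
    refine ⟨M.tendsto_starProjection_mul_pow_of_finite_closure N (hΓ ▸ Γ.finite_toSet), ?_⟩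
    exact (Submodule.eq_starProjection_of_forall_mem_orthogonal fun x =>
      ⟨(hE x).1, hsup (hE x).2⟩).symm
  · simpa using Submodule.add_mem_sup (hE x).1 (hE x).2
end

section
/- Let H be a complex Hilbert space and P, Q orthogonal projections on H with ranges M and N satisfying the braid relation (2P−1)(2Q−1)(2P−1) = (2Q−1)(2P−1)(2Q−1). Then the sequence (PQ)ⁿ converges in operator norm to the orthogonal projection P_{M∩N} onto M ∩ N, and H = (M ∩ N) ⊕ (M⊥ + N⊥). -/
open Filter Topology

/-!
For idempotents `p, q`, the braid relation of `2p - 1` and `2q - 1` is equivalent to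
`4pqp - p = 4qpq - q`; let `e` be a third of this element. Then `qe = eq = e`, and by symmetry
`pe = ep = e`, so `e` maps into `M ∩ N`, while `1 - e = (1 - p)a + (1 - q)b` maps into
`M⊥ + N⊥ ⊆ (M ∩ N)⊥`. Hence `e` is the orthogonal projection onto `M ∩ N`, and
`H = (M ∩ N) ⊕ (M⊥ + N⊥)`. Finally `(pq)² - e = (pq - e)/4` and `e pq = e` give
`(pq)ⁿ⁺¹ = e + 4⁻ⁿ (pq - e)`.
-/

section Algebra

variable (𝕜 : Type*) {A : Type*} [Field 𝕜] [Ring A] [Algebra 𝕜 A]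

def braidInfProj (p q : A) : A := (3 : 𝕜)⁻¹ • ((4 : 𝕜) • (q * p * q) - q)

variable {𝕜} {p q : A}

theorem braid_sub_braid (hp : IsIdempotentElem p) (hq : IsIdempotentElem q) :
    ((2 : 𝕜) • p - 1) * ((2 : 𝕜) • q - 1) * ((2 : 𝕜) • p - 1) -
      ((2 : 𝕜) • q - 1) * ((2 : 𝕜) • p - 1) * ((2 : 𝕜) • q - 1) =
    (2 : 𝕜) • (((4 : 𝕜) • (p * q * p) - p) - ((4 : 𝕜) • (q * p * q) - q)) := by
  simp only [mul_sub, sub_mul, mul_smul_comm, smul_mul_assoc, mul_one, one_mul, hp.eq, hq.eq]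
  module

theorem braid_iff [CharZero 𝕜] (hp : IsIdempotentElem p) (hq : IsIdempotentElem q) :
    ((2 : 𝕜) • p - 1) * ((2 : 𝕜) • q - 1) * ((2 : 𝕜) • p - 1) =
      ((2 : 𝕜) • q - 1) * ((2 : 𝕜) • p - 1) * ((2 : 𝕜) • q - 1) ↔
    (4 : 𝕜) • (p * q * p) - p = (4 : 𝕜) • (q * p * q) - q := by
  rw [← sub_eq_zero, braid_sub_braid hp hq, smul_eq_zero, sub_eq_zero]
  simp

theorem mul_braidInfProj (hq : IsIdempotentElem q) :
    q * braidInfProj 𝕜 p q = braidInfProj 𝕜 p q := by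
  simp only [braidInfProj, mul_sub, mul_smul_comm, ← mul_assoc, hq.eq]

theorem braidInfProj_mul (hq : IsIdempotentElem q) :
    braidInfProj 𝕜 p q * q = braidInfProj 𝕜 p q := by
  simp only [braidInfProj, sub_mul, smul_mul_assoc, hq.mul_mul_self, hq.eq]

theorem one_sub_braidInfProj [CharZero 𝕜] (hq : IsIdempotentElem q) :
    1 - braidInfProj 𝕜 p q =
      (1 - p) * ((4 / 3 : 𝕜) • q) + (1 - q) * (1 - (4 / 3 : 𝕜) • ((1 - p) * q)) := by
  simp only [braidInfProj, mul_sub, sub_mul, mul_smul_comm, mul_one, one_mul, ← mul_assoc, hq.eq]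
  match_scalars <;> field_simp <;> ring

section Braid

variable (hpq : (4 : 𝕜) • (p * q * p) - p = (4 : 𝕜) • (q * p * q) - q)
include hpq

theorem braidInfProj_comm : braidInfProj 𝕜 p q = braidInfProj 𝕜 q p := by
  rw [braidInfProj, braidInfProj, hpq]

theorem braidInfProj_mul_mul (hp : IsIdempotentElem p) (hq : IsIdempotentElem q) :
    braidInfProj 𝕜 p q * (p * q) = braidInfProj 𝕜 p q := by
  rw [← mul_assoc, braidInfProj_comm hpq, braidInfProj_mul hp, ← braidInfProj_comm hpq,
    braidInfProj_mul hq]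

theorem mul_mul_sub_braidInfProj [CharZero 𝕜] (hq : IsIdempotentElem q) :
    p * q * (p * q) - braidInfProj 𝕜 p q = (4 : 𝕜)⁻¹ • (p * q - braidInfProj 𝕜 p q) := by
  have hpqp : p * q * p = (4 : 𝕜)⁻¹ • ((4 : 𝕜) • (q * p * q) - q + p) := by
    rw [← hpq, sub_add_cancel, inv_smul_smul₀ (by norm_num : (4 : 𝕜) ≠ 0)]
  rw [← mul_assoc, hpqp, braidInfProj]
  simp only [smul_mul_assoc, sub_mul, add_mul, hq.mul_mul_self, hq.eq]
  module

end Braid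

end Algebra

theorem pow_succ_eq_add_smul {R A : Type*} [CommSemiring R] [Ring A] [Algebra R A] {c : R}
    {x e : A} (hex : e * x = e) (hx : x * x - e = c • (x - e)) (n : ℕ) :
    x ^ (n + 1) = e + c ^ n • (x - e) := by
  induction n with
  | zero => simp
  | succ n ih =>
    rw [pow_succ, ih, add_mul, smul_mul_assoc, sub_mul, hex, hx, smul_smul, ← pow_succ]

theorem tendsto_pow_of_mul_self_sub_eq_smul {𝕜 A : Type*} [NormedField 𝕜] [NormedRing A]
    [NormedAlgebra 𝕜 A] {c : 𝕜} (hc : ‖c‖ < 1) {x e : A} (hex : e * x = e)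
    (hx : x * x - e = c • (x - e)) : Tendsto (fun n => x ^ n) atTop (𝓝 e) := by
  rw [← tendsto_add_atTop_iff_nat 1]
  simp_rw [pow_succ_eq_add_smul hex hx]
  simpa using ((tendsto_pow_atTop_nhds_zero_of_norm_lt_one hc).smul_const (x - e)).const_add e

section InnerProductSpace

variable {𝕜 E : Type*} [RCLike 𝕜] [NormedAddCommGroup E] [InnerProductSpace 𝕜 E]

theorem Submodule.hasOrthogonalProjection_of_forall {K : Submodule 𝕜 E} {T : E → E}
    (hT : ∀ x, T x ∈ K ∧ x - T x ∈ Kᗮ) : K.HasOrthogonalProjection :=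
  ⟨fun x => ⟨T x, hT x⟩⟩

theorem Submodule.starProjection_eq_of_forall {K : Submodule 𝕜 E} [K.HasOrthogonalProjection]
    {T : E →L[𝕜] E} (hT : ∀ x, T x ∈ K ∧ x - T x ∈ Kᗮ) : K.starProjection = T :=
  ContinuousLinearMap.ext fun x => K.eq_starProjection_of_mem_orthogonal (hT x).1 (hT x).2

theorem Submodule.isCompl_of_forall {K L : Submodule 𝕜 E} (hL : L ≤ Kᗮ) {T : E → E}
    (hT : ∀ x, T x ∈ K ∧ x - T x ∈ L) : IsCompl K L where
  disjoint := K.orthogonal_disjoint.mono_right hL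
  codisjoint := codisjoint_iff.2 <| eq_top_iff.2 fun x _ => by
    simpa using Submodule.add_mem_sup (hT x).1 (hT x).2

variable {M N : Submodule 𝕜 E} [M.HasOrthogonalProjection] [N.HasOrthogonalProjection]

theorem braidInfProj_apply_mem_inf
    (hMN : (4 : 𝕜) • (M.starProjection * N.starProjection * M.starProjection) - M.starProjection =
      (4 : 𝕜) • (N.starProjection * M.starProjection * N.starProjection) - N.starProjection)
    (x : E) : braidInfProj 𝕜 M.starProjection N.starProjection x ∈ M ⊓ N := by
  constructor
  · rw [braidInfProj_comm hMN, ← mul_braidInfProj M.isIdempotentElem_starProjection]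
    exact M.starProjection_apply_mem _
  · rw [← mul_braidInfProj N.isIdempotentElem_starProjection]
    exact N.starProjection_apply_mem _

theorem sub_braidInfProj_apply_mem_sup (x : E) :
    x - braidInfProj 𝕜 M.starProjection N.starProjection x ∈ Mᗮ ⊔ Nᗮ := by
  have h := congr($(one_sub_braidInfProj (𝕜 := 𝕜) (p := M.starProjection)
    N.isIdempotentElem_starProjection) x)
  simp only [sub_apply, add_apply, mul_apply_eq_comp, one_apply_eq_self] at h
  rw [h]
  exact Submodule.add_mem_sup (M.sub_starProjection_mem_orthogonal _)
    (N.sub_starProjection_mem_orthogonal _)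

end InnerProductSpace

theorem stmt_13_general {H : Type*} [NormedAddCommGroup H] [InnerProductSpace ℂ H]
    (M N : Submodule ℂ H) (P Q : H →L[ℂ] H)
    (hP : ∀ x : H, P x ∈ M ∧ x - P x ∈ Mᗮ)
    (hQ : ∀ x : H, Q x ∈ N ∧ x - Q x ∈ Nᗮ)
    (hbraid : ((2 : ℂ) • P - 1) * ((2 : ℂ) • Q - 1) * ((2 : ℂ) • P - 1) =
      ((2 : ℂ) • Q - 1) * ((2 : ℂ) • P - 1) * ((2 : ℂ) • Q - 1)) :
    (∀ R : H →L[ℂ] H, (∀ x : H, R x ∈ M ⊓ N ∧ x - R x ∈ (M ⊓ N)ᗮ) →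
      Tendsto (fun n : ℕ => (P * Q) ^ n) atTop (𝓝 R)) ∧
    IsCompl (M ⊓ N) (Mᗮ ⊔ Nᗮ) := by
  have := Submodule.hasOrthogonalProjection_of_forall hP
  have := Submodule.hasOrthogonalProjection_of_forall hQ
  obtain rfl := (Submodule.starProjection_eq_of_forall hP).symm
  obtain rfl := (Submodule.starProjection_eq_of_forall hQ).symm
  have hp := M.isIdempotentElem_starProjection
  have hq := N.isIdempotentElem_starProjection
  have hMN := (braid_iff hp hq).1 hbraid
  have hle : Mᗮ ⊔ Nᗮ ≤ (M ⊓ N)ᗮ :=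
    sup_le (Submodule.orthogonal_le inf_le_left) (Submodule.orthogonal_le inf_le_right)
  have hE : ∀ x, braidInfProj ℂ M.starProjection N.starProjection x ∈ M ⊓ N ∧
      x - braidInfProj ℂ M.starProjection N.starProjection x ∈ Mᗮ ⊔ Nᗮ :=
    fun x => ⟨braidInfProj_apply_mem_inf hMN x, sub_braidInfProj_apply_mem_sup x⟩
  have hE' := fun x => (hE x).imp_right (@hle _)
  have := Submodule.hasOrthogonalProjection_of_forall hE'
  refine ⟨fun R hR => ?_, Submodule.isCompl_of_forall hle hE⟩
  rw [← Submodule.starProjection_eq_of_forall hR, Submodule.starProjection_eq_of_forall hE']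
  exact tendsto_pow_of_mul_self_sub_eq_smul (c := (4 : ℂ)⁻¹) (by norm_num)
    (braidInfProj_mul_mul hMN hp hq) (mul_mul_sub_braidInfProj hMN hq)

/-- If the self-adjoint unitaries `2P - 1` and `2Q - 1` (for orthogonal projections
`P, Q` with ranges `M, N`) satisfy the braid relation, then `(PQ)ⁿ` converges in operator
norm to the orthogonal projection onto `M ∩ N`, and `H = (M ∩ N) ⊕ (M⊥ + N⊥)`. -/
theorem stmt_13 {H : Type*} [NormedAddCommGroup H] [InnerProductSpace ℂ H] [CompleteSpace H]
    (M N : Submodule ℂ H) (P Q : H →L[ℂ] H)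
    (hP : ∀ x : H, P x ∈ M ∧ x - P x ∈ Mᗮ)
    (hQ : ∀ x : H, Q x ∈ N ∧ x - Q x ∈ Nᗮ)
    (hbraid : ((2 : ℂ) • P - 1) * ((2 : ℂ) • Q - 1) * ((2 : ℂ) • P - 1) =
      ((2 : ℂ) • Q - 1) * ((2 : ℂ) • P - 1) * ((2 : ℂ) • Q - 1)) :
    (∀ R : H →L[ℂ] H, (∀ x : H, R x ∈ M ⊓ N ∧ x - R x ∈ (M ⊓ N)ᗮ) →
      Tendsto (fun n : ℕ => (P * Q) ^ n) atTop (𝓝 R)) ∧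
    IsCompl (M ⊓ N) (Mᗮ ⊔ Nᗮ) :=
  stmt_13_general M N P Q hP hQ hbraid
end

section
/- Let H be a complex Hilbert space, P and Q orthogonal projections on H with ranges M and N, and Π := P_{M∩N} the orthogonal projection onto M ∩ N. Suppose A, W, W′ ∈ H satisfy A − P(A) = −W and A − Q(A) = −W′. Then (1 + Π − PQ)((1 − Π)A) = −(W + P(W′)) and (1 + Π − QP)((1 − Π)A) = −(W′ + Q(W)). Consequently, if in addition M + N is closed, then (1 − Π)A = −(1 + Π − PQ)⁻¹(W + P(W′)) = −(1 + Π − QP)⁻¹(W′ + Q(W)). -/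
theorem apply_eq_self_of_mem_of_isOrthogonalProjection {𝕜 H : Type*} [RCLike 𝕜]
    [NormedAddCommGroup H] [InnerProductSpace 𝕜 H] {S : Submodule 𝕜 H} {P : H →L[𝕜] H}
    (hP : ∀ x : H, P x ∈ S ∧ x - P x ∈ Sᗮ) {x : H} (hx : x ∈ S) : P x = x := by
  have hdiff : x - P x ∈ S ⊓ Sᗮ := ⟨S.sub_mem hx (hP x).1, (hP x).2⟩
  rw [S.inf_orthogonal_eq_bot, Submodule.mem_bot, sub_eq_zero] at hdiff
  exact hdiff.symm

/- Since `P`, `Q`, `R` all fix `R A`, the left side collapses to `A - P (Q A)`, and then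
`Q A = A + W'`, `P A = A + W`. -/
theorem one_add_sub_mul_apply_sub_apply {𝕜 E : Type*} [Ring 𝕜] [TopologicalSpace E]
    [AddCommGroup E] [Module 𝕜 E] [IsTopologicalAddGroup E] {P Q R : E →L[𝕜] E} {A W W' : E}
    (hPR : P (R A) = R A) (hQR : Q (R A) = R A) (hRR : R (R A) = R A)
    (hPA : A - P A = -W) (hQA : A - Q A = -W') :
    (1 + R - P * Q) (A - R A) = -(W + P W') := by
  have hPA' : P A = A + W := by linear_combination (norm := module) -hPA
  have hQA' : Q A = A + W' := by linear_combination (norm := module) -hQA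
  simp only [sub_apply, add_apply, one_apply_eq_self, mul_apply_eq_comp,
    map_sub, map_add, hRR, hQR, hPR, hQA', hPA']
  abel

theorem eq_neg_apply_of_mul_eq_one {𝕜 E : Type*} [Ring 𝕜] [TopologicalSpace E]
    [AddCommGroup E] [Module 𝕜 E] [IsTopologicalAddGroup E] {S T : E →L[𝕜] E} {x y : E}
    (hT : T * S = 1) (hx : S x = -y) : x = -T y := by
  rw [← map_neg, ← hx, ← mul_apply_eq_comp, hT, one_apply_eq_self]

theorem stmt_15_general {H : Type*} [NormedAddCommGroup H] [InnerProductSpace ℂ H]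
    (M N : Submodule ℂ H) (P Q R : H →L[ℂ] H)
    (hP : ∀ x : H, P x ∈ M ∧ x - P x ∈ Mᗮ)
    (hQ : ∀ x : H, Q x ∈ N ∧ x - Q x ∈ Nᗮ)
    (hR : ∀ x : H, R x ∈ M ⊓ N ∧ x - R x ∈ (M ⊓ N)ᗮ)
    (A W W' : H) (hA1 : A - P A = -W) (hA2 : A - Q A = -W') :
    (1 + R - P * Q) (A - R A) = -(W + P W') ∧
    (1 + R - Q * P) (A - R A) = -(W' + Q W) ∧
    (IsClosed ((M ⊔ N : Submodule ℂ H) : Set H) →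
      ∀ T T' : H →L[ℂ] H,
        T * (1 + R - P * Q) = 1 → T' * (1 + R - Q * P) = 1 →
        A - R A = -(T (W + P W')) ∧ A - R A = -(T' (W' + Q W))) := by
  have hRA : R A ∈ M ⊓ N := (hR A).1
  have hPR := apply_eq_self_of_mem_of_isOrthogonalProjection hP hRA.1
  have hQR := apply_eq_self_of_mem_of_isOrthogonalProjection hQ hRA.2
  have hRR := apply_eq_self_of_mem_of_isOrthogonalProjection hR hRA
  have hPQ := one_add_sub_mul_apply_sub_apply hPR hQR hRR hA1 hA2
  have hQP := one_add_sub_mul_apply_sub_apply hQR hPR hRR hA2 hA1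
  exact ⟨hPQ, hQP, fun _ T T' hT hT' =>
    ⟨eq_neg_apply_of_mul_eq_one hT hPQ, eq_neg_apply_of_mul_eq_one hT' hQP⟩⟩

/-- Determination of the connection form: if `A - P A = -W` and `A - Q A = -W'` for
orthogonal projections `P, Q` onto `M, N`, and `R` is the orthogonal projection onto
`M ∩ N`, then `(1 + R - PQ)((1 - R)A) = -(W + P W')` and
`(1 + R - QP)((1 - R)A) = -(W' + Q W)`; consequently, if `M + N` is closed, `(1 - R)A`
is obtained by applying the inverses of `1 + R - PQ` resp. `1 + R - QP`. -/
theorem stmt_15 {H : Type*} [NormedAddCommGroup H] [InnerProductSpace ℂ H] [CompleteSpace H]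
    (M N : Submodule ℂ H) (P Q R : H →L[ℂ] H)
    (hP : ∀ x : H, P x ∈ M ∧ x - P x ∈ Mᗮ)
    (hQ : ∀ x : H, Q x ∈ N ∧ x - Q x ∈ Nᗮ)
    (hR : ∀ x : H, R x ∈ M ⊓ N ∧ x - R x ∈ (M ⊓ N)ᗮ)
    (A W W' : H) (hA1 : A - P A = -W) (hA2 : A - Q A = -W') :
    (1 + R - P * Q) (A - R A) = -(W + P W') ∧
    (1 + R - Q * P) (A - R A) = -(W' + Q W) ∧
    (IsClosed ((M ⊔ N : Submodule ℂ H) : Set H) →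
      ∀ T T' : H →L[ℂ] H,
        T * (1 + R - P * Q) = 1 → T' * (1 + R - Q * P) = 1 →
        A - R A = -(T (W + P W')) ∧ A - R A = -(T' (W' + Q W))) :=
  stmt_15_general M N P Q R hP hQ hR A W W' hA1 hA2
end

section
/- Let H be a complex Hilbert space, P and Q orthogonal projections on H with ranges M and N such that M + N is closed, and Π := P_{M∩N}. Let W, W′ ∈ H satisfy P(W) = 0, Q(W′) = 0, and (1 + Π − PQ)⁻¹(W + P(W′)) = (1 + Π − QP)⁻¹(W′ + Q(W)). Then A := −(1 + Π − PQ)⁻¹(W + P(W′)) satisfies A − P(A) = −W, A − Q(A) = −W′, and Π(A) = 0. -/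
/-!
Applying `1 + Π - PQ` to `A' := (1 + Π - PQ)⁻¹(W + P W')` gives `A' + Π A' - P Q A' = W + P W'`.
Since `Π` vanishes on `Mᗮ` and `Nᗮ`, both contained in `(M ∩ N)ᗮ`, we get `Π P = Π Q = Π` and
`Π W = Π W' = 0`, so applying `Π` leaves `Π A' = 0`. Applying `P` to the remaining identity
`A' - P Q A' = W + P W'` and subtracting gives `A' - P A' = W`. The concordance condition says
that `A'` equally solves the identity with the roles of `(P, W)` and `(Q, W')` exchanged, which
gives `A' - Q A' = W'`.
-/

section OrthogonalProjection

variable {𝕜 E : Type*} [RCLike 𝕜] [NormedAddCommGroup E] [InnerProductSpace 𝕜 E]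
  {K L : Submodule 𝕜 E}

theorem apply_eq_self_of_mem {P : E → E} (hP : ∀ x, P x ∈ K ∧ x - P x ∈ Kᗮ) {y : E}
    (hy : y ∈ K) : P y = y :=
  (sub_eq_zero.mp <| Submodule.disjoint_def.mp K.orthogonal_disjoint _
    (K.sub_mem hy (hP y).1) (hP y).2).symm

theorem apply_apply_eq_apply {P : E → E} (hP : ∀ x, P x ∈ K ∧ x - P x ∈ Kᗮ) (x : E) :
    P (P x) = P x :=
  apply_eq_self_of_mem hP (hP x).1

theorem apply_eq_zero_of_mem_orthogonal {P : E → E} (hP : ∀ x, P x ∈ K ∧ x - P x ∈ Kᗮ)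
    {z : E} (hz : z ∈ Kᗮ) : P z = 0 :=
  Submodule.disjoint_def.mp K.orthogonal_disjoint _ (hP z).1
    (by simpa using Kᗮ.sub_mem hz (hP z).2)

theorem mem_orthogonal_of_apply_eq_zero {P : E → E} (hP : ∀ x, P x ∈ K ∧ x - P x ∈ Kᗮ)
    {z : E} (hz : P z = 0) : z ∈ Kᗮ := by
  simpa [hz] using (hP z).2

theorem apply_apply_eq_apply_of_le {P R : E →L[𝕜] E} (hP : ∀ x, P x ∈ K ∧ x - P x ∈ Kᗮ)
    (hR : ∀ x, R x ∈ L ∧ x - R x ∈ Lᗮ) (hLK : L ≤ K) (x : E) : R (P x) = R x := by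
  have h : R (x - P x) = 0 :=
    apply_eq_zero_of_mem_orthogonal hR (Submodule.orthogonal_le hLK (hP x).2)
  rw [map_sub, sub_eq_zero] at h
  exact h.symm

theorem apply_eq_zero_and_sub_apply_eq_of_add_sub_apply_apply_eq {M N : Submodule 𝕜 E}
    {P Q R : E →L[𝕜] E} (hP : ∀ x, P x ∈ M ∧ x - P x ∈ Mᗮ)
    (hQ : ∀ x, Q x ∈ N ∧ x - Q x ∈ Nᗮ) (hR : ∀ x, R x ∈ L ∧ x - R x ∈ Lᗮ)
    (hLM : L ≤ M) (hLN : L ≤ N) {A W W' : E} (hW : P W = 0) (hW' : Q W' = 0)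
    (hA : A + R A - P (Q A) = W + P W') : R A = 0 ∧ A - P A = W := by
  have hRA : R A = 0 := by
    have h := congrArg R hA
    rw [map_sub, map_add, map_add, apply_apply_eq_apply hR, apply_apply_eq_apply_of_le hP hR hLM,
      apply_apply_eq_apply_of_le hQ hR hLN, apply_apply_eq_apply_of_le hP hR hLM,
      apply_eq_zero_of_mem_orthogonal hR
        (Submodule.orthogonal_le hLM (mem_orthogonal_of_apply_eq_zero hP hW)),
      apply_eq_zero_of_mem_orthogonal hR
        (Submodule.orthogonal_le hLN (mem_orthogonal_of_apply_eq_zero hQ hW'))] at h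
    simpa using h
  have hA' : A - P (Q A) = W + P W' := by simpa [hRA] using hA
  have hPA : P A - P (Q A) = P W' := by
    simpa [apply_apply_eq_apply hP, hW] using congrArg P hA'
  refine ⟨hRA, ?_⟩
  linear_combination (norm := abel) hA' - hPA

end OrthogonalProjection

theorem stmt_16_general {H : Type*} [NormedAddCommGroup H] [InnerProductSpace ℂ H]
    (M N : Submodule ℂ H) (P Q R : H →L[ℂ] H)
    (hP : ∀ x : H, P x ∈ M ∧ x - P x ∈ Mᗮ)
    (hQ : ∀ x : H, Q x ∈ N ∧ x - Q x ∈ Nᗮ)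
    (hR : ∀ x : H, R x ∈ M ⊓ N ∧ x - R x ∈ (M ⊓ N)ᗮ)
    (T T' : H →L[ℂ] H)
    (hT : T * (1 + R - P * Q) = 1 ∧ (1 + R - P * Q) * T = 1)
    (hT' : T' * (1 + R - Q * P) = 1 ∧ (1 + R - Q * P) * T' = 1)
    (W W' : H) (hW : P W = 0) (hW' : Q W' = 0)
    (hconc : T (W + P W') = T' (W' + Q W)) :
    -(T (W + P W')) - P (-(T (W + P W'))) = -W ∧
    -(T (W + P W')) - Q (-(T (W + P W'))) = -W' ∧
    R (-(T (W + P W'))) = 0 := by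
  set A := T (W + P W')
  have hPQ : A + R A - P (Q A) = W + P W' := by
    simpa only [mul_apply_eq_comp, sub_apply, add_apply, one_apply_eq_self] using
      congr($(hT.2) (W + P W'))
  have hQP : A + R A - Q (P A) = W' + Q W := by
    simpa only [mul_apply_eq_comp, sub_apply, add_apply, one_apply_eq_self, ← hconc] using
      congr($(hT'.2) (W' + Q W))
  obtain ⟨hRA, hPA⟩ := apply_eq_zero_and_sub_apply_eq_of_add_sub_apply_apply_eq hP hQ hR
    inf_le_left inf_le_right hW hW' hPQ
  obtain ⟨-, hQA⟩ := apply_eq_zero_and_sub_apply_eq_of_add_sub_apply_apply_eq hQ hP hR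
    inf_le_right inf_le_left hW' hW hQP
  refine ⟨?_, ?_, by simp [hRA]⟩
  · rw [map_neg, ← hPA]; abel
  · rw [map_neg, ← hQA]; abel

/-- Existence of the connection form: with `M + N` closed, `P W = 0`, `Q W' = 0` and the
`†`-concordance condition `(1 + Π - PQ)⁻¹(W + P W') = (1 + Π - QP)⁻¹(W' + Q W)`, the
vector `A := -(1 + Π - PQ)⁻¹(W + P W')` satisfies `A - P A = -W`, `A - Q A = -W'` and
`Π A = 0`. -/
theorem stmt_16 {H : Type*} [NormedAddCommGroup H] [InnerProductSpace ℂ H] [CompleteSpace H]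
    (M N : Submodule ℂ H) (P Q R : H →L[ℂ] H)
    (hP : ∀ x : H, P x ∈ M ∧ x - P x ∈ Mᗮ)
    (hQ : ∀ x : H, Q x ∈ N ∧ x - Q x ∈ Nᗮ)
    (hR : ∀ x : H, R x ∈ M ⊓ N ∧ x - R x ∈ (M ⊓ N)ᗮ)
    (hMN : IsClosed ((M ⊔ N : Submodule ℂ H) : Set H))
    (T T' : H →L[ℂ] H)
    (hT : T * (1 + R - P * Q) = 1 ∧ (1 + R - P * Q) * T = 1)
    (hT' : T' * (1 + R - Q * P) = 1 ∧ (1 + R - Q * P) * T' = 1)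
    (W W' : H) (hW : P W = 0) (hW' : Q W' = 0)
    (hconc : T (W + P W') = T' (W' + Q W)) :
    -(T (W + P W')) - P (-(T (W + P W'))) = -W ∧
    -(T (W + P W')) - Q (-(T (W + P W'))) = -W' ∧
    R (-(T (W + P W'))) = 0 :=
  stmt_16_general M N P Q R hP hQ hR T T' hT hT' W W' hW hW' hconc
end

section
/- Let H be a complex Hilbert space, P and Q orthogonal projections on H with ranges M and N such that M + N is closed, and Π := P_{M∩N}. Let J : H → H be a conjugate-linear isometric involution (J(x+y) = Jx + Jy, J(λx) = conj(λ)·Jx, J∘J = id, ‖Jx‖ = ‖x‖) satisfying J∘P∘J = Q. Suppose E, F, C ∈ H satisfy J(C) = C and E − F = (1 − PQ)C. Then (1 + Π − PQ)⁻¹E − (1 + Π − QP)⁻¹(JE) = (1 + Π − PQ)⁻¹F − (1 + Π − QP)⁻¹(JF). -/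
/-! Since `R` projects onto `M ∩ N`, it is fixed by `1 + R - PQ`, so the left inverse `T` fixes
it too and `T (1 - PQ) = 1 - R`; symmetrically `T' (1 - QP) = 1 - R`. Conjugating by `J` swaps
`P` and `Q`, so `J ((1 - PQ) C) = (1 - QP) C` for `J C = C`. Hence replacing `F` by
`E = F + (1 - PQ) C` adds `C - R C` to both `T F` and `T' (J F)`. -/

theorem Submodule.apply_eq_self_of_isProj {𝕜 E : Type*} [RCLike 𝕜] [NormedAddCommGroup E]
    [InnerProductSpace 𝕜 E] {K : Submodule 𝕜 E} {S : E → E}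
    (hS : ∀ x, S x ∈ K ∧ x - S x ∈ Kᗮ) {m : E} (hm : m ∈ K) : S m = m := by
  have hK : S m - m ∈ K := K.sub_mem (hS m).1 hm
  have hKperp : S m - m ∈ Kᗮ := by
    simpa only [neg_sub] using Kᗮ.neg_mem (hS m).2
  exact sub_eq_zero.1 (Submodule.disjoint_def.1 K.orthogonal_disjoint _ hK hKperp)

theorem mul_one_sub_eq_one_sub_of_mul_one_add_sub_eq_one {A : Type*} [Ring A] {T R X : A}
    (hT : T * (1 + R - X) = 1) (hXR : X * R = R) (hRR : R * R = R) :
    T * (1 - X) = 1 - R := by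
  have hTR : T * R = R := by
    calc T * R = T * ((1 + R - X) * R) := by rw [add_sub_right_comm, add_mul, sub_mul, hXR,
            hRR, one_mul, sub_self, zero_add]
      _ = R := by rw [← mul_assoc, hT, one_mul]
  calc T * (1 - X) = T * (1 + R - X) - T * R := by rw [← mul_sub]; congr 1; abel
    _ = 1 - R := by rw [hT, hTR]

theorem stmt_17_general {H : Type*} [NormedAddCommGroup H] [InnerProductSpace ℂ H]
    (M N : Submodule ℂ H) (P Q R : H →L[ℂ] H)
    (hP : ∀ x : H, P x ∈ M ∧ x - P x ∈ Mᗮ)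
    (hQ : ∀ x : H, Q x ∈ N ∧ x - Q x ∈ Nᗮ)
    (hR : ∀ x : H, R x ∈ M ⊓ N ∧ x - R x ∈ (M ⊓ N)ᗮ)
    (J : H → H)
    (hJadd : ∀ x y : H, J (x + y) = J x + J y)
    (hJinv : ∀ x : H, J (J x) = x)
    (hJPJ : ∀ x : H, J (P (J x)) = Q x)
    (T T' : H →L[ℂ] H)
    (hT : T * (1 + R - P * Q) = 1 ∧ (1 + R - P * Q) * T = 1)
    (hT' : T' * (1 + R - Q * P) = 1 ∧ (1 + R - Q * P) * T' = 1)
    (E F C : H) (hC : J C = C) (hEF : E - F = (1 - P * Q) C) :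
    T E - T' (J E) = T F - T' (J F) := by
  have hPR : P * R = R := ContinuousLinearMap.ext fun x =>
    Submodule.apply_eq_self_of_isProj hP (hR x).1.1
  have hQR : Q * R = R := ContinuousLinearMap.ext fun x =>
    Submodule.apply_eq_self_of_isProj hQ (hR x).1.2
  have hRR : R * R = R := ContinuousLinearMap.ext fun x =>
    Submodule.apply_eq_self_of_isProj hR (hR x).1
  have hTC : T ((1 - P * Q) C) = C - R C := by
    rw [← mul_apply_eq_comp,
      mul_one_sub_eq_one_sub_of_mul_one_add_sub_eq_one hT.1 (by rw [mul_assoc, hQR, hPR]) hRR]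
    rfl
  have hT'C : T' ((1 - Q * P) C) = C - R C := by
    rw [← mul_apply_eq_comp,
      mul_one_sub_eq_one_sub_of_mul_one_add_sub_eq_one hT'.1 (by rw [mul_assoc, hPR, hQR]) hRR]
    rfl
  have hJsub : ∀ x y, J (x - y) = J x - J y := map_sub (AddMonoidHom.mk' J hJadd)
  have hJP : ∀ x, J (P x) = Q (J x) := fun x => by rw [← hJPJ, hJinv]
  have hJQ : ∀ x, J (Q x) = P (J x) := fun x => by rw [← hJPJ, hJinv]
  have hJEF : J E - J F = (1 - Q * P) C := by
    rw [← hJsub, hEF]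
    simp only [sub_apply, one_apply_eq_self, mul_apply_eq_comp]
    rw [hJsub, hJP, hJQ, hC]
  rw [sub_eq_sub_iff_sub_eq_sub, ← map_sub, ← map_sub, hEF, hJEF, hTC, hT'C]

/-- Frame-independence lemma: let `P, Q` be the orthogonal projections onto `M, N` with
`M + N` closed, `R` the orthogonal projection onto `M ∩ N`, and `J` a conjugate-linear
isometric involution with `J P J = Q`. If `J C = C` and `E - F = (1 - PQ)C`, then
`(1 + Π - PQ)⁻¹E - (1 + Π - QP)⁻¹(JE) = (1 + Π - PQ)⁻¹F - (1 + Π - QP)⁻¹(JF)`. -/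
theorem stmt_17 {H : Type*} [NormedAddCommGroup H] [InnerProductSpace ℂ H] [CompleteSpace H]
    (M N : Submodule ℂ H) (P Q R : H →L[ℂ] H)
    (hP : ∀ x : H, P x ∈ M ∧ x - P x ∈ Mᗮ)
    (hQ : ∀ x : H, Q x ∈ N ∧ x - Q x ∈ Nᗮ)
    (hR : ∀ x : H, R x ∈ M ⊓ N ∧ x - R x ∈ (M ⊓ N)ᗮ)
    (hMN : IsClosed ((M ⊔ N : Submodule ℂ H) : Set H))
    (J : H → H)
    (hJadd : ∀ x y : H, J (x + y) = J x + J y)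
    (hJsmul : ∀ (c : ℂ) (x : H), J (c • x) = (starRingEnd ℂ c) • J x)
    (hJinv : ∀ x : H, J (J x) = x)
    (hJiso : ∀ x : H, ‖J x‖ = ‖x‖)
    (hJPJ : ∀ x : H, J (P (J x)) = Q x)
    (T T' : H →L[ℂ] H)
    (hT : T * (1 + R - P * Q) = 1 ∧ (1 + R - P * Q) * T = 1)
    (hT' : T' * (1 + R - Q * P) = 1 ∧ (1 + R - Q * P) * T' = 1)
    (E F C : H) (hC : J C = C) (hEF : E - F = (1 - P * Q) C) :
    T E - T' (J E) = T F - T' (J F) :=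
  stmt_17_general M N P Q R hP hQ hR J hJadd hJinv hJPJ T T' hT hT' E F C hC hEF
end
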